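/- arXiv:1411.6277 — 3 statements merged into one kernel-verified Lean document; each statement's English description precedes it below -/
import Mathlib

section
/- Let V be a Banach space, d ≥ 1, Q ⊂ ℝ^d an open bounded cube, p ≥ 1, and δ ∈ (0,1]. Let f : Q → V be Bochner integrable with finite fractional seminorm [f]_{δ,p;Q;V} := ( ∫_Q ∫_Q |f(x) − f(y)|_V^p / |x−y|^{2d+δp} dx dy )^{1/p} < ∞. Then f has a modification (a function equal to f almost everywhere on Q) belonging to C^δ(Q;V), and there is a constant N = N(d,δ,p), independent of f and of Q, such that this modification satisfies [f]_{δ;Q;V} ≤ N [f]_{δ,p;Q;V} and sup_{x∈Q} |f(x)|_V ≤ N |Q|^{δ/d} [f]_{δ,p;Q;V} + |Q|^{−1/p} ( ∫_Q |f(x)|_V^p dx )^{1/p}, where |Q| denotes the volume of the cube Q. -/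
/-
Campanato's argument. Let `R = c √d` be the diameter of the cube `Q` and, for `x ∈ Q`, let
`A x n` be the average of `f` over `Q ∩ B(x, R 2⁻ⁿ)`; such a set has volume `≳ (R 2⁻ⁿ)ᵈ`.
By Jensen's inequality, and since `|u - v| ≲ R 2⁻ⁿ` for `u, v` in two such sets at the same or
consecutive scales with centres `R 2⁻ⁿ`-close, the averages `A x n`, `A x (n + 1)` and
`A x n`, `A y n` differ by `≲ (R 2⁻ⁿ)^δ [f]_{δ,p}`. So `A x n` converges geometrically to some
`g x`; choosing `R 2⁻ⁿ ≈ |x - y|` gives the Hölder bound, and `A x 0 = ⨍_Q f` gives the bound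
on `sup |g|`. At every `x` with `∫_Q |f x - f y|^p / |x - y|^{2d+δp} dy < ∞`, hence almost
everywhere, the same estimate shows `A x n → f x`, so `g = f` a.e.
-/

open MeasureTheory ENNReal Filter Topology Metric Set

section Averages

variable {α V : Type*} [MeasurableSpace α] {μ : Measure α} [NormedAddCommGroup V]
  [NormedSpace ℝ V] [CompleteSpace V]

theorem laverage_le_laverage_rpow_rpow_one_div {F : α → ℝ≥0∞} (hF : AEMeasurable F μ) {p : ℝ}
    (hp : 1 ≤ p) : ⨍⁻ a, F a ∂μ ≤ (⨍⁻ a, F a ^ p ∂μ) ^ (1 / p) := by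
  have h := eLpNorm'_le_eLpNorm'_mul_rpow_measure_univ one_pos hp
    (hF.smul_measure (μ univ)⁻¹).aestronglyMeasurable
  simp only [eLpNorm'_eq_lintegral_enorm, enorm_eq_self, rpow_one, div_one] at h
  have hν : ((μ univ)⁻¹ • μ) univ ^ (1 - 1 / p) ≤ 1 := by
    refine rpow_le_one ?_ (sub_nonneg.2 ((div_le_one (by linarith)).2 hp))
    simp [ENNReal.inv_mul_le_one]
  exact h.trans (mul_le_of_le_one_right' hν)

variable {f : α → V} {S T : Set α}

theorem enorm_setAverage_sub_le_setLAverage (hS₀ : μ S ≠ 0) (hS : μ S ≠ ∞)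
    (hf : IntegrableOn f S μ) (w : V) :
    ‖(⨍ u in S, f u ∂μ) - w‖ₑ ≤ ⨍⁻ u in S, ‖f u - w‖ₑ ∂μ := by
  have : IsFiniteMeasure (μ.restrict S) := isFiniteMeasure_restrict.2 hS
  have : NeZero (μ.restrict S) := ⟨by simpa using hS₀⟩
  have hf' : Integrable f ((μ.restrict S univ)⁻¹ • μ.restrict S) :=
    hf.smul_measure (by simpa using hS₀)
  rw [average_eq', laverage_eq']
  have h := enorm_integral_le_lintegral_enorm (fun u ↦ f u - w)
    (μ := (μ.restrict S univ)⁻¹ • μ.restrict S)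
  rwa [integral_sub hf' (integrable_const w), integral_const, probReal_univ, one_smul] at h

theorem enorm_setAverage_sub_le_setLAverage_rpow (hS₀ : μ S ≠ 0) (hS : μ S ≠ ∞)
    (hf : IntegrableOn f S μ) (w : V) {p : ℝ} (hp : 1 ≤ p) :
    ‖(⨍ u in S, f u ∂μ) - w‖ₑ ≤ (⨍⁻ u in S, ‖f u - w‖ₑ ^ p ∂μ) ^ (1 / p) :=
  (enorm_setAverage_sub_le_setLAverage hS₀ hS hf w).trans <|
    laverage_le_laverage_rpow_rpow_one_div
      (hf.aestronglyMeasurable.sub aestronglyMeasurable_const).enorm hp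

theorem enorm_setAverage_sub_setAverage_le_setLAverage_rpow [SFinite μ] (hS₀ : μ S ≠ 0)
    (hS : μ S ≠ ∞) (hT₀ : μ T ≠ 0) (hT : μ T ≠ ∞) (hfS : IntegrableOn f S μ)
    (hfT : IntegrableOn f T μ) {p : ℝ} (hp : 1 ≤ p) :
    ‖(⨍ u in S, f u ∂μ) - ⨍ v in T, f v ∂μ‖ₑ ≤
      (⨍⁻ u in S, ⨍⁻ v in T, ‖f u - f v‖ₑ ^ p ∂μ ∂μ) ^ (1 / p) := by
  have hmeas : AEMeasurable (fun u ↦ ⨍⁻ v in T, ‖f u - f v‖ₑ ^ p ∂μ) (μ.restrict S) := by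
    simp only [setLAverage_eq]
    exact (((hfS.aestronglyMeasurable.comp_fst.sub
      hfT.aestronglyMeasurable.comp_snd).enorm.pow_const p).lintegral_prod_right').div_const _
  calc ‖(⨍ u in S, f u ∂μ) - ⨍ v in T, f v ∂μ‖ₑ
      ≤ ⨍⁻ u in S, ‖f u - ⨍ v in T, f v ∂μ‖ₑ ∂μ :=
        enorm_setAverage_sub_le_setLAverage hS₀ hS hfS _
    _ ≤ ⨍⁻ u in S, (⨍⁻ v in T, ‖f u - f v‖ₑ ^ p ∂μ) ^ (1 / p) ∂μ := by
        refine laverage_mono_ae (.of_forall fun u ↦ ?_)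
        simpa only [enorm_sub_rev] using
          enorm_setAverage_sub_le_setLAverage_rpow hT₀ hT hfT (f u) hp
    _ ≤ (⨍⁻ u in S, ⨍⁻ v in T, ‖f u - f v‖ₑ ^ p ∂μ ∂μ) ^ (1 / p) := by
        refine (laverage_le_laverage_rpow_rpow_one_div (hmeas.pow_const _) hp).trans_eq ?_
        simp only [← rpow_mul, one_div_mul_cancel (by linarith : p ≠ 0), rpow_one]

theorem enorm_setAverage_le_setLIntegral_rpow (hS₀ : μ S ≠ 0) (hS : μ S ≠ ∞)
    (hf : IntegrableOn f S μ) {p : ℝ} (hp : 1 ≤ p) :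
    ‖⨍ u in S, f u ∂μ‖ₑ ≤ μ S ^ (-(1 / p)) * (∫⁻ u in S, ‖f u‖ₑ ^ p ∂μ) ^ (1 / p) := by
  have h := enorm_setAverage_sub_le_setLAverage_rpow hS₀ hS hf 0 hp
  simp only [sub_zero, setLAverage_eq] at h
  rwa [ENNReal.div_eq_inv_mul, mul_rpow_of_nonneg _ _ (by positivity), inv_rpow, ← rpow_neg] at h

end Averages

/-- `gagliardoEnergy μ p (2 * d + δ * p) f Q` is `[f]_{δ,p;Q;V} ^ p`. -/
noncomputable def gagliardoEnergy {X V : Type*} [MeasurableSpace X] [EDist X] [EDist V]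
    (μ : Measure X) (p m : ℝ) (f : X → V) (Q : Set X) : ℝ≥0∞ :=
  ∫⁻ x in Q, ∫⁻ y in Q, edist (f x) (f y) ^ p / edist x y ^ m ∂μ ∂μ

section Energy

variable {X V : Type*} [MetricSpace X] [PseudoEMetricSpace V] {f : X → V} {p m K : ℝ}

theorem edist_rpow_le_mul_div (hp : 0 < p) (hm : 0 ≤ m) {u v : X} (huv : dist u v ≤ K) :
    edist (f u) (f v) ^ p ≤ ENNReal.ofReal K ^ m * (edist (f u) (f v) ^ p / edist u v ^ m) := by
  rcases eq_or_ne u v with rfl | huv'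
  · simp [zero_rpow_of_pos hp]
  have h₀ : edist u v ^ m ≠ 0 := (rpow_pos (edist_pos.2 huv') (edist_ne_top u v)).ne'
  have hK : edist u v ^ m ≤ ENNReal.ofReal K ^ m :=
    rpow_le_rpow ((edist_le_ofReal (dist_nonneg.trans huv)).2 huv) hm
  calc edist (f u) (f v) ^ p
      = edist (f u) (f v) ^ p / edist u v ^ m * edist u v ^ m :=
        (ENNReal.div_mul_cancel h₀ (rpow_ne_top_of_nonneg hm (edist_ne_top u v))).symm
    _ ≤ ENNReal.ofReal K ^ m * (edist (f u) (f v) ^ p / edist u v ^ m) := by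
        rw [mul_comm]; gcongr

variable [MeasurableSpace X] {μ : Measure X} {S T Q : Set X}

theorem setLIntegral_edist_rpow_le (hS : MeasurableSet S) (hSQ : S ⊆ Q) (hp : 0 < p)
    (hm : 0 ≤ m) {x : X} (hx : ∀ v ∈ S, dist x v ≤ K) :
    ∫⁻ v in S, edist (f x) (f v) ^ p ∂μ ≤
      ENNReal.ofReal K ^ m * ∫⁻ v in Q, edist (f x) (f v) ^ p / edist x v ^ m ∂μ := by
  calc ∫⁻ v in S, edist (f x) (f v) ^ p ∂μ
      ≤ ∫⁻ v in S, ENNReal.ofReal K ^ m * (edist (f x) (f v) ^ p / edist x v ^ m) ∂μ :=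
        setLIntegral_mono' hS fun v hv ↦ edist_rpow_le_mul_div hp hm (hx v hv)
    _ ≤ ENNReal.ofReal K ^ m * ∫⁻ v in Q, edist (f x) (f v) ^ p / edist x v ^ m ∂μ := by
        rw [lintegral_const_mul' _ _ (rpow_ne_top_of_nonneg hm ofReal_ne_top)]
        gcongr

theorem setLIntegral_setLIntegral_edist_rpow_le (hS : MeasurableSet S) (hT : MeasurableSet T)
    (hSQ : S ⊆ Q) (hTQ : T ⊆ Q) (hp : 0 < p) (hm : 0 ≤ m)
    (hST : ∀ u ∈ S, ∀ v ∈ T, dist u v ≤ K) :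
    ∫⁻ u in S, ∫⁻ v in T, edist (f u) (f v) ^ p ∂μ ∂μ ≤
      ENNReal.ofReal K ^ m * gagliardoEnergy μ p m f Q := by
  calc ∫⁻ u in S, ∫⁻ v in T, edist (f u) (f v) ^ p ∂μ ∂μ
      ≤ ∫⁻ u in S, ENNReal.ofReal K ^ m *
          ∫⁻ v in Q, edist (f u) (f v) ^ p / edist u v ^ m ∂μ ∂μ :=
        setLIntegral_mono' hS fun u hu ↦ setLIntegral_edist_rpow_le hT hTQ hp hm (hST u hu)
    _ ≤ ENNReal.ofReal K ^ m * gagliardoEnergy μ p m f Q := by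
        rw [lintegral_const_mul' _ _ (rpow_ne_top_of_nonneg hm ofReal_ne_top)]
        gcongr
        exact lintegral_mono_set hSQ

theorem setLAverage_setLAverage_edist_rpow_le (hS : MeasurableSet S) (hT : MeasurableSet T)
    (hSQ : S ⊆ Q) (hTQ : T ⊆ Q) (hp : 0 < p) (hm : 0 ≤ m) (hT₀ : μ T ≠ 0)
    (hST : ∀ u ∈ S, ∀ v ∈ T, dist u v ≤ K) :
    ⨍⁻ u in S, ⨍⁻ v in T, edist (f u) (f v) ^ p ∂μ ∂μ ≤
      ENNReal.ofReal K ^ m * gagliardoEnergy μ p m f Q / μ T / μ S := by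
  simp only [setLAverage_eq, div_eq_mul_inv, lintegral_mul_const' _ _ (ENNReal.inv_ne_top.2 hT₀)]
  gcongr
  exact setLIntegral_setLIntegral_edist_rpow_le hS hT hSQ hTQ hp hm hST

end Energy

theorem ae_lintegral_edist_rpow_div_lt_top {X V : Type*} [NormedAddCommGroup X]
    [MeasurableSpace X] [OpensMeasurableSpace X] [MeasurableSub₂ X] {μ : Measure X} [SFinite μ]
    [NormedAddCommGroup V] {f : X → V} {Q : Set X} (hf : AEStronglyMeasurable f (μ.restrict Q))
    {p m : ℝ} (hE : gagliardoEnergy μ p m f Q ≠ ∞) :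
    ∀ᵐ x ∂μ.restrict Q, ∫⁻ y in Q, edist (f x) (f y) ^ p / edist x y ^ m ∂μ < ∞ := by
  refine ae_lt_top' (AEMeasurable.lintegral_prod_right' (f := fun z : X × X ↦
    edist (f z.1) (f z.2) ^ p / edist z.1 z.2 ^ m) ?_) hE
  simp only [edist_eq_enorm_sub]
  exact ((hf.comp_fst.sub hf.comp_snd).enorm.pow_const p).div
    ((measurable_fst.sub measurable_snd).enorm.pow_const m).aemeasurable

theorem mul_rpow_div_div_rpow_one_div {d : ℕ} {p δ ρ κ L : ℝ} (hp : 0 < p) (hρ : 0 < ρ) (hκ : 0 < κ)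
    (hL : 0 ≤ L) :
    ((L * ρ) ^ (2 * (d : ℝ) + δ * p) / (κ * ρ ^ d) / (κ * ρ ^ d)) ^ (1 / p) =
      (L ^ (2 * (d : ℝ) + δ * p) / κ ^ 2) ^ (1 / p) * ρ ^ δ := by
  have hρm : ρ ^ (2 * (d : ℝ) + δ * p) = (ρ ^ d) ^ 2 * ρ ^ (δ * p) := by
    rw [Real.rpow_add hρ, ← pow_mul, ← Real.rpow_natCast]
    push_cast
    ring_nf
  have hsplit : (L * ρ) ^ (2 * (d : ℝ) + δ * p) / (κ * ρ ^ d) / (κ * ρ ^ d) =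
      L ^ (2 * (d : ℝ) + δ * p) / κ ^ 2 * ρ ^ (δ * p) := by
    rw [Real.mul_rpow hL hρ.le, hρm]
    field_simp
  rw [hsplit, Real.mul_rpow (by positivity) (by positivity), ← Real.rpow_mul hρ.le,
    mul_assoc, mul_one_div_cancel hp.ne', mul_one]

section ScaleEstimates

variable {X V : Type*} [MetricSpace X] [MeasurableSpace X] {μ : Measure X}
  [NormedAddCommGroup V] [NormedSpace ℝ V] [CompleteSpace V] {f : X → V} {S T Q : Set X}
  {d : ℕ} {p δ ρ κ : ℝ}

theorem enorm_setAverage_sub_setAverage_le_gagliardoEnergy [SFinite μ] {L : ℝ}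
    (hS : MeasurableSet S) (hT : MeasurableSet T) (hSQ : S ⊆ Q) (hTQ : T ⊆ Q) (hQ : μ Q ≠ ∞)
    (hf : IntegrableOn f Q μ) (hp : 1 ≤ p) (hδ : 0 ≤ δ) (hρ : 0 < ρ) (hκ : 0 < κ) (hL : 0 ≤ L)
    (hSμ : ENNReal.ofReal (κ * ρ ^ d) ≤ μ S) (hTμ : ENNReal.ofReal (κ * ρ ^ d) ≤ μ T)
    (hST : ∀ u ∈ S, ∀ v ∈ T, dist u v ≤ L * ρ) :
    ‖(⨍ u in S, f u ∂μ) - ⨍ v in T, f v ∂μ‖ₑ ≤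
      ENNReal.ofReal ((L ^ (2 * (d : ℝ) + δ * p) / κ ^ 2) ^ (1 / p) * ρ ^ δ) *
        gagliardoEnergy μ p (2 * d + δ * p) f Q ^ (1 / p) := by
  have hp₀ : 0 < p := by linarith
  have hm : 0 ≤ 2 * (d : ℝ) + δ * p := by positivity
  have hvol : 0 < ENNReal.ofReal (κ * ρ ^ d) := ofReal_pos.2 (by positivity)
  have hS₀ : μ S ≠ 0 := (hvol.trans_le hSμ).ne'
  have hT₀ : μ T ≠ 0 := (hvol.trans_le hTμ).ne'
  have hSfin : μ S ≠ ∞ := measure_ne_top_of_subset hSQ hQ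
  have hTfin : μ T ≠ ∞ := measure_ne_top_of_subset hTQ hQ
  calc ‖(⨍ u in S, f u ∂μ) - ⨍ v in T, f v ∂μ‖ₑ
      ≤ (⨍⁻ u in S, ⨍⁻ v in T, ‖f u - f v‖ₑ ^ p ∂μ ∂μ) ^ (1 / p) :=
        enorm_setAverage_sub_setAverage_le_setLAverage_rpow hS₀ hSfin hT₀ hTfin (hf.mono_set hSQ)
          (hf.mono_set hTQ) hp
    _ ≤ (ENNReal.ofReal (L * ρ) ^ (2 * (d : ℝ) + δ * p) *
          gagliardoEnergy μ p (2 * d + δ * p) f Q / μ T / μ S) ^ (1 / p) := by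
        gcongr
        simpa only [edist_eq_enorm_sub] using
          setLAverage_setLAverage_edist_rpow_le (f := f) hS hT hSQ hTQ hp₀ hm hT₀ hST
    _ ≤ (ENNReal.ofReal (L * ρ) ^ (2 * (d : ℝ) + δ * p) * gagliardoEnergy μ p (2 * d + δ * p) f Q /
          ENNReal.ofReal (κ * ρ ^ d) / ENNReal.ofReal (κ * ρ ^ d)) ^ (1 / p) := by
        gcongr
    _ = (ENNReal.ofReal ((L * ρ) ^ (2 * (d : ℝ) + δ * p) / (κ * ρ ^ d) / (κ * ρ ^ d)) *
          gagliardoEnergy μ p (2 * d + δ * p) f Q) ^ (1 / p) := by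
        rw [ofReal_rpow_of_nonneg (by positivity) hm, ENNReal.ofReal_div_of_pos (by positivity),
          ENNReal.ofReal_div_of_pos (by positivity)]
        simp only [div_eq_mul_inv]
        ring_nf
    _ = _ := by
        rw [mul_rpow_of_nonneg _ _ (by positivity), ofReal_rpow_of_nonneg (by positivity)
          (by positivity), mul_rpow_div_div_rpow_one_div hp₀ hρ hκ hL]

theorem enorm_setAverage_sub_apply_le (hS : MeasurableSet S) (hSQ : S ⊆ Q) (hQ : μ Q ≠ ∞)
    (hf : IntegrableOn f Q μ) (hp : 1 ≤ p) (hδ : 0 ≤ δ) (hρ : 0 < ρ) (hκ : 0 < κ)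
    (hSμ : ENNReal.ofReal (κ * ρ ^ d) ≤ μ S) {x : X} (hx : ∀ v ∈ S, dist x v ≤ ρ) :
    ‖(⨍ v in S, f v ∂μ) - f x‖ₑ ≤
      (ENNReal.ofReal (ρ ^ ((d : ℝ) + δ * p) / κ) *
        ∫⁻ v in Q, edist (f x) (f v) ^ p / edist x v ^ (2 * (d : ℝ) + δ * p) ∂μ) ^ (1 / p) := by
  have hp₀ : 0 < p := by linarith
  have hm : 0 ≤ 2 * (d : ℝ) + δ * p := by positivity
  have hS₀ : μ S ≠ 0 := ((ofReal_pos.2 (by positivity)).trans_le hSμ).ne'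
  have hSfin : μ S ≠ ∞ := measure_ne_top_of_subset hSQ hQ
  have hρm : ρ ^ (2 * (d : ℝ) + δ * p) / (κ * ρ ^ d) = ρ ^ ((d : ℝ) + δ * p) / κ := by
    rw [show 2 * (d : ℝ) + δ * p = d + (d + δ * p) by ring, Real.rpow_add hρ,
      Real.rpow_natCast]
    field_simp
  refine (enorm_setAverage_sub_le_setLAverage_rpow hS₀ hSfin (hf.mono_set hSQ) (f x) hp).trans ?_
  gcongr
  calc ⨍⁻ v in S, ‖f v - f x‖ₑ ^ p ∂μ
      = (∫⁻ v in S, edist (f x) (f v) ^ p ∂μ) / μ S := by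
        simp only [setLAverage_eq, edist_eq_enorm_sub, enorm_sub_rev]
    _ ≤ ENNReal.ofReal ρ ^ (2 * (d : ℝ) + δ * p) *
          (∫⁻ v in Q, edist (f x) (f v) ^ p / edist x v ^ (2 * (d : ℝ) + δ * p) ∂μ) /
            ENNReal.ofReal (κ * ρ ^ d) := by
        gcongr
        exact setLIntegral_edist_rpow_le hS hSQ hp₀ hm hx
    _ = _ := by
        rw [ofReal_rpow_of_nonneg hρ.le hm, ← hρm, ENNReal.ofReal_div_of_pos (by positivity)]
        simp only [div_eq_mul_inv]
        ring

end ScaleEstimates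

section Cube

variable {ι : Type*}

def openCube (a : EuclideanSpace ℝ ι) (c : ℝ) : Set (EuclideanSpace ℝ ι) :=
  {x | ∀ i, x i ∈ Ioo (a i) (a i + c)}

variable {a x y : EuclideanSpace ℝ ι} {c : ℝ}

theorem pos_of_mem_openCube [Nonempty ι] (hx : x ∈ openCube a c) : 0 < c := by
  obtain ⟨h₁, h₂⟩ := hx (Classical.arbitrary ι)
  linarith

variable [Fintype ι]

theorem volume_setOf_forall_mem (s : ι → Set ℝ) :
    volume {x : EuclideanSpace ℝ ι | ∀ i, x i ∈ s i} = ∏ i, volume (s i) := by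
  have h : {x : EuclideanSpace ℝ ι | ∀ i, x i ∈ s i} =
      (MeasurableEquiv.toLp 2 (ι → ℝ)).symm ⁻¹' univ.pi s := by
    ext; simp
  rw [h, (EuclideanSpace.volume_preserving_symm_measurableEquiv_toLp ι).measure_preimage_equiv,
    volume_pi_pi]

theorem dist_le_mul_sqrt_card {x y : EuclideanSpace ℝ ι} {s : ℝ} (hs : 0 ≤ s)
    (h : ∀ i, dist (x i) (y i) ≤ s) : dist x y ≤ s * √(Fintype.card ι) := by
  rw [EuclideanSpace.dist_eq]
  calc √(∑ i, dist (x i) (y i) ^ 2) ≤ √(∑ _i : ι, s ^ 2) := by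
        gcongr with i; exact h i
    _ = s * √(Fintype.card ι) := by
        rw [Finset.sum_const, Finset.card_univ, nsmul_eq_mul, mul_comm,
          Real.sqrt_mul (by positivity), Real.sqrt_sq hs]

theorem measurableSet_openCube : MeasurableSet (openCube a c) := by
  simp only [openCube, ofPred_forall]
  exact MeasurableSet.iInter fun i ↦ measurableSet_Ioo.preimage (by fun_prop)

theorem volume_openCube : volume (openCube a c) = ENNReal.ofReal c ^ Fintype.card ι := by
  rw [openCube, volume_setOf_forall_mem]
  simp [Real.volume_Ioo]

theorem volume_openCube_ne_top : volume (openCube a c) ≠ ∞ := by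
  rw [volume_openCube]; exact pow_ne_top ofReal_ne_top

theorem volume_openCube_rpow_div_card [Nonempty ι] (hc : 0 < c) (δ : ℝ) :
    volume (openCube a c) ^ (δ / Fintype.card ι) = ENNReal.ofReal (c ^ δ) := by
  have hd : (Fintype.card ι : ℝ) ≠ 0 := by exact_mod_cast Fintype.card_ne_zero
  rw [volume_openCube, ← rpow_natCast, ← rpow_mul, mul_div_cancel₀ _ hd,
    ofReal_rpow_of_pos hc]

theorem dist_le_of_mem_openCube [Nonempty ι] (hx : x ∈ openCube a c) (hy : y ∈ openCube a c) :
    dist x y ≤ c * √(Fintype.card ι) := by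
  refine dist_le_mul_sqrt_card (pos_of_mem_openCube hx).le fun i ↦ ?_
  obtain ⟨hx₁, hx₂⟩ := hx i
  obtain ⟨hy₁, hy₂⟩ := hy i
  rw [Real.dist_eq, abs_le]
  constructor <;> linarith

theorem ofReal_le_volume_openCube_inter_closedBall [Nonempty ι] (hx : x ∈ openCube a c) {ρ : ℝ}
    (hρ : 0 ≤ ρ) (hρc : ρ ≤ c * √(Fintype.card ι)) :
    ENNReal.ofReal ((ρ / √(Fintype.card ι)) ^ Fintype.card ι) ≤
      volume (openCube a c ∩ closedBall x ρ) := by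
  have hn : 0 < √(Fintype.card ι) := Real.sqrt_pos.2 (by exact_mod_cast Fintype.card_pos)
  set σ := ρ / √(Fintype.card ι)
  have hσ : 0 ≤ σ := by positivity
  have hσc : σ ≤ c := (div_le_iff₀ hn).2 hρc
  set b : EuclideanSpace ℝ ι := WithLp.toLp 2 fun i ↦ max (a i) (x i - σ)
  have hcoord : ∀ i, a i ≤ b i ∧ b i + σ ≤ a i + c ∧ x i - σ ≤ b i ∧ b i ≤ x i := fun i ↦ by
    obtain ⟨hx₁, hx₂⟩ := hx i
    simp only [b, le_max_left, le_max_right, max_le_iff, true_and]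
    exact ⟨max_add_add_right (a i) _ σ ▸ max_le (by linarith) (by linarith), hx₁.le,
      by linarith⟩
  have hsub : openCube b σ ⊆ openCube a c ∩ closedBall x ρ := by
    intro y hy
    refine ⟨fun i ↦ ?_, ?_⟩
    · obtain ⟨hy₁, hy₂⟩ := hy i
      obtain ⟨h₁, h₂, -, -⟩ := hcoord i
      constructor <;> linarith
    · rw [mem_closedBall, ← div_mul_cancel₀ ρ hn.ne']
      refine dist_le_mul_sqrt_card hσ fun i ↦ ?_
      obtain ⟨hy₁, hy₂⟩ := hy i
      obtain ⟨-, -, h₃, h₄⟩ := hcoord i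
      rw [Real.dist_eq, abs_le]
      constructor <;> linarith
  calc ENNReal.ofReal (σ ^ Fintype.card ι) = volume (openCube b σ) := by
        rw [volume_openCube, ofReal_pow hσ]
    _ ≤ _ := measure_mono hsub

theorem ofReal_mul_pow_le_volume_openCube_inter_closedBall [Nonempty ι]
    (hx : x ∈ openCube a c) {ρ r : ℝ} (hρ : 0 ≤ ρ) (hρr : ρ ≤ 2 * r)
    (hrc : r ≤ c * √(Fintype.card ι)) :
    ENNReal.ofReal ((2 * √(Fintype.card ι))⁻¹ ^ Fintype.card ι * ρ ^ Fintype.card ι) ≤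
      volume (openCube a c ∩ closedBall x r) := by
  have hn : 0 < √(Fintype.card ι) := Real.sqrt_pos.2 (by exact_mod_cast Fintype.card_pos)
  refine le_trans ?_ (ofReal_le_volume_openCube_inter_closedBall hx (by linarith) hrc)
  rw [← mul_pow, show (2 * √(Fintype.card ι))⁻¹ * ρ = ρ / 2 / √(Fintype.card ι) by
    field_simp]
  gcongr
  linarith

end Cube

section Dyadic

variable {R C δ : ℝ}

theorem div_two_pow_rpow (hR : 0 ≤ R) (δ : ℝ) (n : ℕ) :
    (R / 2 ^ n) ^ δ = R ^ δ * ((2 : ℝ) ^ (-δ)) ^ n := by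
  rw [Real.div_rpow hR (by positivity), Real.rpow_pow_comm zero_le_two, Real.rpow_neg
    (by positivity), div_eq_mul_inv]

theorem two_rpow_neg_lt_one (hδ : 0 < δ) : (2 : ℝ) ^ (-δ) < 1 :=
  Real.rpow_lt_one_of_one_lt_of_neg one_lt_two (neg_neg_iff_pos.2 hδ)

noncomputable def dyadicHolderConst (δ : ℝ) : ℝ := (2 / (1 - 2 ^ (-δ)) + 1) * 2 ^ δ

theorem dyadicHolderConst_pos (hδ : 0 < δ) : 0 < dyadicHolderConst δ := by
  have := two_rpow_neg_lt_one hδ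
  unfold dyadicHolderConst
  have : 0 < 1 - (2 : ℝ) ^ (-δ) := by linarith
  positivity

variable {V : Type*} [MetricSpace V]

theorem cauchySeq_of_dist_le_dyadic {u : ℕ → V} (hR : 0 ≤ R) (hδ : 0 < δ)
    (hu : ∀ n, dist (u n) (u (n + 1)) ≤ C * (R / 2 ^ n) ^ δ) : CauchySeq u :=
  cauchySeq_of_le_geometric _ (C * R ^ δ) (two_rpow_neg_lt_one hδ) fun n ↦ by
    simpa only [div_two_pow_rpow hR, mul_assoc] using hu n

theorem dist_le_of_dist_le_dyadic {u : ℕ → V} {l : V} (hR : 0 ≤ R) (hδ : 0 < δ)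
    (hu : ∀ n, dist (u n) (u (n + 1)) ≤ C * (R / 2 ^ n) ^ δ) (hl : Tendsto u atTop (𝓝 l))
    (n : ℕ) : dist (u n) l ≤ C * (R / 2 ^ n) ^ δ / (1 - 2 ^ (-δ)) := by
  have := dist_le_of_le_geometric_of_tendsto _ (C * R ^ δ) (two_rpow_neg_lt_one hδ)
    (fun n ↦ by simpa only [div_two_pow_rpow hR, mul_assoc] using hu n) hl n
  simpa only [div_two_pow_rpow hR, mul_assoc] using this

theorem dist_le_dyadicHolderConst_mul {X : Type*} [MetricSpace X] {Q : Set X}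
    {A : X → ℕ → V} {g : X → V} (hR : 0 < R) (hδ : 0 < δ) (hC : 0 ≤ C)
    (hQ : ∀ x ∈ Q, ∀ y ∈ Q, dist x y ≤ R)
    (hA : ∀ x ∈ Q, ∀ n, dist (A x n) (A x (n + 1)) ≤ C * (R / 2 ^ n) ^ δ)
    (hAxy : ∀ x ∈ Q, ∀ y ∈ Q, ∀ n : ℕ, dist x y ≤ R / 2 ^ n →
      dist (A x n) (A y n) ≤ C * (R / 2 ^ n) ^ δ)
    (hg : ∀ x ∈ Q, Tendsto (A x) atTop (𝓝 (g x))) {x y : X} (hx : x ∈ Q) (hy : y ∈ Q) :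
    dist (g x) (g y) ≤ dyadicHolderConst δ * C * dist x y ^ δ := by
  rcases eq_or_ne x y with rfl | hxy
  · rw [dist_self]
    have := dyadicHolderConst_pos hδ
    positivity
  have hr : 0 < dist x y := dist_pos.2 hxy
  obtain ⟨n, hn₁, hn₂⟩ := exists_nat_pow_near ((one_le_div hr).2 (hQ x hx y hy)) one_lt_two
  have hρ₁ : dist x y ≤ R / 2 ^ n := by
    rw [le_div_iff₀ (by positivity), mul_comm]; exact (le_div_iff₀ hr).1 hn₁
  have hρ₂ : R / 2 ^ n ≤ 2 * dist x y := by
    rw [div_le_iff₀ (by positivity)]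
    rw [div_lt_iff₀ hr, pow_succ] at hn₂
    linarith
  have hq : 0 < 1 - (2 : ℝ) ^ (-δ) := by linarith [two_rpow_neg_lt_one hδ]
  calc dist (g x) (g y) ≤ dist (A x n) (g x) + dist (A x n) (A y n) + dist (A y n) (g y) := by
        rw [dist_comm (A x n)]; exact dist_triangle4 _ _ _ _
    _ ≤ C * (R / 2 ^ n) ^ δ / (1 - 2 ^ (-δ)) + C * (R / 2 ^ n) ^ δ +
          C * (R / 2 ^ n) ^ δ / (1 - 2 ^ (-δ)) := by
        gcongr
        exacts [dist_le_of_dist_le_dyadic hR.le hδ (hA x hx) (hg x hx) n,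
          hAxy x hx y hy n hρ₁, dist_le_of_dist_le_dyadic hR.le hδ (hA y hy) (hg y hy) n]
    _ = (2 / (1 - 2 ^ (-δ)) + 1) * C * (R / 2 ^ n) ^ δ := by
        field_simp; ring
    _ ≤ (2 / (1 - 2 ^ (-δ)) + 1) * C * (2 * dist x y) ^ δ := by gcongr
    _ = dyadicHolderConst δ * C * dist x y ^ δ := by
        rw [Real.mul_rpow zero_le_two hr.le, dyadicHolderConst]; ring

end Dyadic

theorem holderOnWith_of_edist_le {X Y : Type*} [PseudoEMetricSpace X] [PseudoEMetricSpace Y]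
    {g : X → Y} {s : Set X} {K : ℝ≥0∞} {δ : ℝ} (hK : K ≠ ∞) (hδ : 0 ≤ δ)
    (h : ∀ x ∈ s, ∀ y ∈ s, edist (g x) (g y) ≤ K * edist x y ^ δ) :
    HolderOnWith K.toNNReal δ.toNNReal g s := fun x hx y hy ↦ by
  rw [coe_toNNReal hK, Real.coe_toNNReal δ hδ]
  exact h x hx y hy

theorem dist_le_of_edist_le_ofReal_mul {V : Type*} [PseudoMetricSpace V] {u v : V} {K : ℝ}
    {Z : ℝ≥0∞} (hK : 0 ≤ K) (hZ : Z ≠ ∞) (h : edist u v ≤ ENNReal.ofReal K * Z) :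
    dist u v ≤ K * Z.toReal := by
  simpa [dist_edist, toReal_ofReal hK] using toReal_mono (mul_ne_top ofReal_ne_top hZ) h

theorem edist_le_ofReal_mul_mul_edist_rpow {X V : Type*} [PseudoMetricSpace X]
    [PseudoMetricSpace V] {u v : V} {x y : X} {K δ : ℝ} {Z : ℝ≥0∞} (hK : 0 ≤ K) (hZ : Z ≠ ∞)
    (hδ : 0 ≤ δ) (h : dist u v ≤ K * Z.toReal * dist x y ^ δ) :
    edist u v ≤ ENNReal.ofReal K * Z * edist x y ^ δ := by
  rw [edist_dist, edist_dist, ofReal_rpow_of_nonneg dist_nonneg hδ, ← ofReal_toReal hZ,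
    ← ofReal_mul hK, ← ofReal_mul (by positivity)]
  exact ofReal_le_ofReal h

noncomputable def dyadicAverage {X V : Type*} [MetricSpace X] [MeasurableSpace X]
    [NormedAddCommGroup V] [NormedSpace ℝ V] (μ : Measure X) (Q : Set X) (R : ℝ) (f : X → V)
    (x : X) (n : ℕ) : V :=
  ⨍ u in Q ∩ closedBall x (R / 2 ^ n), f u ∂μ

theorem dyadicAverage_zero {X V : Type*} [MetricSpace X] [MeasurableSpace X]
    [NormedAddCommGroup V] [NormedSpace ℝ V] {μ : Measure X} {Q : Set X} {R : ℝ} {f : X → V}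
    {x : X} (hQ : Q ⊆ closedBall x R) : dyadicAverage μ Q R f x 0 = ⨍ u in Q, f u ∂μ := by
  rw [dyadicAverage, pow_zero, div_one, inter_eq_left.2 hQ]

/-- `3` bounds the distance between points of two nearby balls of radius `ρ` in units of `ρ`,
and `(2 * √d)⁻¹ ^ d * ρ ^ d` bounds from below the volume of the intersection of the cube with
a ball of radius `ρ / 2` centred in it. -/
noncomputable def cubeAverageConst (d : ℕ) (p δ : ℝ) : ℝ :=
  (3 ^ (2 * (d : ℝ) + δ * p) / ((2 * √d)⁻¹ ^ d) ^ 2) ^ (1 / p)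

theorem cubeAverageConst_pos {d : ℕ} (hd : 0 < d) (p δ : ℝ) : 0 < cubeAverageConst d p δ := by
  have : 0 < √d := Real.sqrt_pos.2 (by exact_mod_cast hd)
  unfold cubeAverageConst
  positivity

section CubeAverages

variable {ι V : Type*} [Fintype ι] [Nonempty ι] [NormedAddCommGroup V] [NormedSpace ℝ V]
  [CompleteSpace V] {a : EuclideanSpace ℝ ι} {c p δ : ℝ} {f : EuclideanSpace ℝ ι → V}

theorem dist_dyadicAverage_le (hp : 1 ≤ p) (hδ : 0 ≤ δ)
    (hf : IntegrableOn f (openCube a c))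
    (hE : gagliardoEnergy volume p (2 * Fintype.card ι + δ * p) f (openCube a c) ≠ ∞)
    {x y : EuclideanSpace ℝ ι} (hx : x ∈ openCube a c) (hy : y ∈ openCube a c) {n k : ℕ}
    (hnk : n ≤ k) (hkn : k ≤ n + 1) (hxy : dist x y ≤ c * √(Fintype.card ι) / 2 ^ n) :
    dist (dyadicAverage volume (openCube a c) (c * √(Fintype.card ι)) f x n)
        (dyadicAverage volume (openCube a c) (c * √(Fintype.card ι)) f y k) ≤
      cubeAverageConst (Fintype.card ι) p δ *
        (gagliardoEnergy volume p (2 * Fintype.card ι + δ * p) f (openCube a c) ^ (1 / p)).toReal *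
          (c * √(Fintype.card ι) / 2 ^ n) ^ δ := by
  set d := Fintype.card ι
  set R := c * √d
  set ρ := R / 2 ^ n
  have hsd : 0 < √d := Real.sqrt_pos.2 (by exact_mod_cast Fintype.card_pos)
  have hR : 0 < R := mul_pos (pos_of_mem_openCube hx) hsd
  have hρ : 0 < ρ := by positivity
  have hρR : ρ ≤ R := div_le_self hR.le (one_le_pow₀ one_le_two)
  have hρk : ρ ≤ 2 * (R / 2 ^ k) ∧ R / 2 ^ k ≤ ρ := by
    constructor
    · calc ρ = 2 * (R / 2 ^ (n + 1)) := by rw [pow_succ]; ring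
        _ ≤ 2 * (R / 2 ^ k) := by gcongr; exact one_le_two
    · exact div_le_div_of_nonneg_left hR.le (by positivity) (pow_le_pow_right₀ one_le_two hnk)
  have hSμ := ofReal_mul_pow_le_volume_openCube_inter_closedBall hx hρ.le (by linarith) hρR
  have hTμ := ofReal_mul_pow_le_volume_openCube_inter_closedBall hy hρ.le hρk.1 (hρk.2.trans hρR)
  have hST : ∀ u ∈ openCube a c ∩ closedBall x ρ, ∀ v ∈ openCube a c ∩ closedBall y (R / 2 ^ k),
      dist u v ≤ 3 * ρ := by
    rintro u ⟨-, hu⟩ v ⟨-, hv⟩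
    rw [mem_closedBall] at hu hv
    linarith [dist_triangle4 u x y v, dist_comm v y, hρk.2]
  rw [mul_right_comm]
  have hC₀ := cubeAverageConst_pos (Fintype.card_pos (α := ι)) p δ
  refine dist_le_of_edist_le_ofReal_mul (by positivity)
    (rpow_ne_top_of_nonneg (by positivity) hE) ?_
  rw [edist_eq_enorm_sub]
  exact enorm_setAverage_sub_setAverage_le_gagliardoEnergy
    (measurableSet_openCube.inter measurableSet_closedBall)
    (measurableSet_openCube.inter measurableSet_closedBall) inter_subset_left inter_subset_left
    volume_openCube_ne_top hf hp hδ hρ (by positivity) (by norm_num) hSμ hTμ hST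

theorem dist_dyadicAverage_succ_le (hp : 1 ≤ p) (hδ : 0 ≤ δ)
    (hf : IntegrableOn f (openCube a c))
    (hE : gagliardoEnergy volume p (2 * Fintype.card ι + δ * p) f (openCube a c) ≠ ∞)
    {x : EuclideanSpace ℝ ι} (hx : x ∈ openCube a c) (n : ℕ) :
    dist (dyadicAverage volume (openCube a c) (c * √(Fintype.card ι)) f x n)
        (dyadicAverage volume (openCube a c) (c * √(Fintype.card ι)) f x (n + 1)) ≤
      cubeAverageConst (Fintype.card ι) p δ *
        (gagliardoEnergy volume p (2 * Fintype.card ι + δ * p) f (openCube a c) ^ (1 / p)).toReal *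
          (c * √(Fintype.card ι) / 2 ^ n) ^ δ := by
  have hR : 0 ≤ c * √(Fintype.card ι) := dist_nonneg.trans (dist_le_of_mem_openCube hx hx)
  exact dist_dyadicAverage_le hp hδ hf hE hx hx n.le_succ le_rfl (by rw [dist_self]; positivity)

theorem tendsto_limUnder_dyadicAverage (hp : 1 ≤ p) (hδ : 0 < δ)
    (hf : IntegrableOn f (openCube a c))
    (hE : gagliardoEnergy volume p (2 * Fintype.card ι + δ * p) f (openCube a c) ≠ ∞)
    {x : EuclideanSpace ℝ ι} (hx : x ∈ openCube a c) :
    Tendsto (dyadicAverage volume (openCube a c) (c * √(Fintype.card ι)) f x) atTop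
      (𝓝 (limUnder atTop (dyadicAverage volume (openCube a c) (c * √(Fintype.card ι)) f x))) :=
  (cauchySeq_of_dist_le_dyadic (dist_nonneg.trans (dist_le_of_mem_openCube hx hx)) hδ
    (dist_dyadicAverage_succ_le hp hδ.le hf hE hx)).tendsto_limUnder

theorem edist_le_of_tendsto_dyadicAverage (hp : 1 ≤ p) (hδ : 0 < δ)
    (hf : IntegrableOn f (openCube a c))
    (hE : gagliardoEnergy volume p (2 * Fintype.card ι + δ * p) f (openCube a c) ≠ ∞)
    {g : EuclideanSpace ℝ ι → V} (hg : ∀ x ∈ openCube a c, Tendsto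
      (dyadicAverage volume (openCube a c) (c * √(Fintype.card ι)) f x) atTop (𝓝 (g x)))
    {x y : EuclideanSpace ℝ ι} (hx : x ∈ openCube a c) (hy : y ∈ openCube a c) :
    edist (g x) (g y) ≤
      ENNReal.ofReal (dyadicHolderConst δ * cubeAverageConst (Fintype.card ι) p δ) *
        gagliardoEnergy volume p (2 * Fintype.card ι + δ * p) f (openCube a c) ^ (1 / p) *
          edist x y ^ δ := by
  have hC₀ := cubeAverageConst_pos (Fintype.card_pos (α := ι)) p δ
  have hEp := rpow_ne_top_of_nonneg (by positivity : 0 ≤ 1 / p) hE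
  refine edist_le_ofReal_mul_mul_edist_rpow ((mul_pos (dyadicHolderConst_pos hδ) hC₀).le) hEp
    hδ.le ?_
  rw [mul_assoc (dyadicHolderConst δ)]
  exact dist_le_dyadicHolderConst_mul (mul_pos (pos_of_mem_openCube hx)
    (Real.sqrt_pos.2 (by exact_mod_cast Fintype.card_pos))) hδ (by positivity)
    (fun x hx y hy ↦ dist_le_of_mem_openCube hx hy)
    (fun x hx ↦ dist_dyadicAverage_succ_le hp hδ.le hf hE hx)
    (fun x hx y hy n hxy ↦ dist_dyadicAverage_le hp hδ.le hf hE hx hy le_rfl n.le_succ hxy)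
    hg hx hy

theorem enorm_le_of_tendsto_dyadicAverage (hp : 1 ≤ p) (hδ : 0 < δ)
    (hf : IntegrableOn f (openCube a c))
    (hE : gagliardoEnergy volume p (2 * Fintype.card ι + δ * p) f (openCube a c) ≠ ∞)
    {g : EuclideanSpace ℝ ι → V} (hg : ∀ x ∈ openCube a c, Tendsto
      (dyadicAverage volume (openCube a c) (c * √(Fintype.card ι)) f x) atTop (𝓝 (g x)))
    {x : EuclideanSpace ℝ ι} (hx : x ∈ openCube a c) :
    ‖g x‖ₑ ≤
      ENNReal.ofReal (cubeAverageConst (Fintype.card ι) p δ * √(Fintype.card ι) ^ δ /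
          (1 - 2 ^ (-δ))) * volume (openCube a c) ^ (δ / Fintype.card ι) *
        gagliardoEnergy volume p (2 * Fintype.card ι + δ * p) f (openCube a c) ^ (1 / p) +
      volume (openCube a c) ^ (-(1 / p)) *
        (∫⁻ u in openCube a c, ‖f u‖ₑ ^ p) ^ (1 / p) := by
  have hc : 0 < c := pos_of_mem_openCube hx
  have hd : (0 : ℝ) < Fintype.card ι := by exact_mod_cast Fintype.card_pos
  have hQ₀ : volume (openCube a c) ≠ 0 := by
    rw [volume_openCube]; exact pow_ne_zero _ (ofReal_pos.2 hc).ne'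
  have hQ : volume (openCube a c) ≠ ∞ := volume_openCube_ne_top
  have hA₀ : dyadicAverage volume (openCube a c) (c * √(Fintype.card ι)) f x 0 =
      ⨍ u in openCube a c, f u :=
    dyadicAverage_zero fun y hy ↦ mem_closedBall.2 (dist_le_of_mem_openCube hy hx)
  have htail := dist_le_of_dist_le_dyadic (mul_pos hc (Real.sqrt_pos.2 hd)).le hδ
    (dist_dyadicAverage_succ_le hp hδ.le hf hE hx) (hg x hx) 0
  have hq : 0 < 1 - (2 : ℝ) ^ (-δ) := by linarith [two_rpow_neg_lt_one hδ]
  have hC₀ := cubeAverageConst_pos (Fintype.card_pos (α := ι)) p δ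
  calc ‖g x‖ₑ = edist (g x) 0 := (edist_zero_right _).symm
    _ ≤ edist (g x) (dyadicAverage volume (openCube a c) (c * √(Fintype.card ι)) f x 0) +
          edist (dyadicAverage volume (openCube a c) (c * √(Fintype.card ι)) f x 0) 0 :=
        edist_triangle _ _ _
    _ ≤ _ := by
        refine add_le_add ?_ ?_
        · rw [edist_comm, edist_dist, volume_openCube_rpow_div_card hc,
            ← ofReal_toReal (rpow_ne_top_of_nonneg (by positivity : 0 ≤ 1 / p) hE),
            ← ofReal_mul (by positivity), ← ofReal_mul (by positivity)]
          refine ofReal_le_ofReal (htail.trans_eq ?_)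
          rw [pow_zero, div_one, Real.mul_rpow hc.le (Real.sqrt_nonneg _)]
          ring
        · rw [edist_zero_right, hA₀]
          exact enorm_setAverage_le_setLIntegral_rpow hQ₀ hQ hf hp

theorem ae_tendsto_dyadicAverage (hp : 1 ≤ p) (hδ : 0 ≤ δ)
    (hf : IntegrableOn f (openCube a c))
    (hE : gagliardoEnergy volume p (2 * Fintype.card ι + δ * p) f (openCube a c) ≠ ∞) :
    ∀ᵐ x ∂volume.restrict (openCube a c), Tendsto
      (dyadicAverage volume (openCube a c) (c * √(Fintype.card ι)) f x) atTop (𝓝 (f x)) := by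
  set d := Fintype.card ι
  set R := c * √d
  set κ : ℝ := (√d)⁻¹ ^ d
  have hsd : 0 < √d := Real.sqrt_pos.2 (by exact_mod_cast Fintype.card_pos)
  have he : 0 < (d : ℝ) + δ * p := by
    have : (0 : ℝ) < d := by exact_mod_cast Fintype.card_pos
    positivity
  have hQ : volume (openCube a c) ≠ ∞ := volume_openCube_ne_top
  filter_upwards [ae_lintegral_edist_rpow_div_lt_top hf.aestronglyMeasurable hE,
    ae_restrict_mem measurableSet_openCube] with x hI hx
  have hR : 0 < R := mul_pos (pos_of_mem_openCube hx) hsd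
  have hlim : Tendsto (fun n : ℕ ↦ (ENNReal.ofReal ((R / 2 ^ n) ^ ((d : ℝ) + δ * p) / κ) *
      ∫⁻ y in openCube a c, edist (f x) (f y) ^ p / edist x y ^ (2 * (d : ℝ) + δ * p)) ^ (1 / p))
      atTop (𝓝 0) := by
    have h₁ : Tendsto (fun n : ℕ ↦ (R / 2 ^ n) ^ ((d : ℝ) + δ * p) / κ) atTop (𝓝 0) := by
      simp_rw [div_two_pow_rpow hR.le]
      simpa using ((tendsto_pow_atTop_nhds_zero_of_lt_one (by positivity)
        (two_rpow_neg_lt_one he)).const_mul (R ^ ((d : ℝ) + δ * p))).div_const κ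
    have h₂ := ENNReal.Tendsto.mul_const (ENNReal.tendsto_ofReal h₁) (Or.inr hI.ne)
    have h₃ := ((ENNReal.continuous_rpow_const (y := 1 / p)).tendsto _).comp h₂
    rwa [ofReal_zero, zero_mul, zero_rpow_of_pos (one_div_pos.2 (by linarith))] at h₃
  rw [tendsto_iff_edist_tendsto_0]
  refine tendsto_of_tendsto_of_tendsto_of_le_of_le tendsto_const_nhds hlim (fun _ ↦ bot_le)
    fun n ↦ ?_
  have hρ : 0 < R / 2 ^ n := by positivity
  have hSμ : ENNReal.ofReal (κ * (R / 2 ^ n) ^ d) ≤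
      volume (openCube a c ∩ closedBall x (R / 2 ^ n)) := by
    rw [← mul_pow, mul_comm, ← div_eq_mul_inv]
    exact ofReal_le_volume_openCube_inter_closedBall hx hρ.le
      (div_le_self hR.le (one_le_pow₀ one_le_two))
  rw [edist_eq_enorm_sub]
  exact enorm_setAverage_sub_apply_le (measurableSet_openCube.inter measurableSet_closedBall)
    inter_subset_left hQ hf hp hδ hρ (by positivity) hSμ
    fun v hv ↦ (dist_comm x v).trans_le (mem_closedBall.1 hv.2)

end CubeAverages

universe u

/-- Sobolev-type embedding on a bounded open cube `Q ⊂ ℝ^d`.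
If `f : Q → V` is Bochner integrable with finite fractional seminorm
`[f]_{δ,p;Q;V} = (∫_Q ∫_Q ‖f x − f y‖^p / |x−y|^{2d+δp})^{1/p}`, then `f` has a modification
`g` which is (bounded) continuous on `Q` with `[g]_{δ;Q;V} ≤ N [f]_{δ,p;Q;V}` and
`sup_Q ‖g‖ ≤ N |Q|^{δ/d} [f]_{δ,p;Q;V} + |Q|^{−1/p} (∫_Q ‖f‖^p)^{1/p}`,
where `N = N(d,δ,p)` does not depend on `f` or on `Q`. -/
theorem stmt_0 (d : ℕ) (hd : 1 ≤ d) (p δ : ℝ) (hp : 1 ≤ p) (hδ : δ ∈ Set.Ioc (0 : ℝ) 1) :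
    ∃ N : ℝ, 0 < N ∧
      ∀ (V : Type u) [NormedAddCommGroup V] [NormedSpace ℝ V] [CompleteSpace V]
        (a : EuclideanSpace ℝ (Fin d)) (c : ℝ), 0 < c →
        ∀ Q : Set (EuclideanSpace ℝ (Fin d)),
          Q = {x : EuclideanSpace ℝ (Fin d) | ∀ i, x i ∈ Set.Ioo (a i) (a i + c)} →
        ∀ f : EuclideanSpace ℝ (Fin d) → V, IntegrableOn f Q volume →
        (∫⁻ x in Q, ∫⁻ y in Q,
            (‖f x - f y‖₊ : ℝ≥0∞) ^ p / (‖x - y‖₊ : ℝ≥0∞) ^ (2 * (d : ℝ) + δ * p)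
            ∂volume ∂volume) ≠ ⊤ →
        ∃ g : EuclideanSpace ℝ (Fin d) → V,
          (∀ᵐ x ∂volume.restrict Q, g x = f x) ∧
          ContinuousOn g Q ∧
          (∀ x ∈ Q, ∀ y ∈ Q,
            (‖g x - g y‖₊ : ℝ≥0∞) ≤
              ENNReal.ofReal N *
                (∫⁻ x' in Q, ∫⁻ y' in Q,
                  (‖f x' - f y'‖₊ : ℝ≥0∞) ^ p /
                    (‖x' - y'‖₊ : ℝ≥0∞) ^ (2 * (d : ℝ) + δ * p) ∂volume ∂volume) ^ (1 / p) *
                (‖x - y‖₊ : ℝ≥0∞) ^ δ) ∧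
          (∀ x ∈ Q,
            (‖g x‖₊ : ℝ≥0∞) ≤
              ENNReal.ofReal N * volume Q ^ (δ / (d : ℝ)) *
                (∫⁻ x' in Q, ∫⁻ y' in Q,
                  (‖f x' - f y'‖₊ : ℝ≥0∞) ^ p /
                    (‖x' - y'‖₊ : ℝ≥0∞) ^ (2 * (d : ℝ) + δ * p) ∂volume ∂volume) ^ (1 / p) +
                volume Q ^ (-(1 / p)) *
                  (∫⁻ x' in Q, (‖f x'‖₊ : ℝ≥0∞) ^ p ∂volume) ^ (1 / p)) := by
  obtain ⟨hδ₀, -⟩ := hδ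
  have : Nonempty (Fin d) := ⟨⟨0, hd⟩⟩
  refine ⟨max (dyadicHolderConst δ * cubeAverageConst d p δ)
    (cubeAverageConst d p δ * √d ^ δ / (1 - 2 ^ (-δ))),
    lt_max_of_lt_left (mul_pos (dyadicHolderConst_pos hδ₀) (cubeAverageConst_pos hd p δ)), ?_⟩
  intro V _ _ _ a c hc Q hQ f hf hE
  obtain rfl : Q = openCube a c := hQ
  simp only [← enorm_eq_nnnorm, ← edist_eq_enorm_sub] at hE ⊢
  replace hE :
      gagliardoEnergy volume p (2 * Fintype.card (Fin d) + δ * p) f (openCube a c) ≠ ⊤ := by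
    rw [Fintype.card_fin]; exact hE
  have hg := fun x (hx : x ∈ openCube a c) ↦ tendsto_limUnder_dyadicAverage hp hδ₀ hf hE hx
  refine ⟨fun x ↦ limUnder atTop
    (dyadicAverage volume (openCube a c) (c * √(Fintype.card (Fin d))) f x), ?_, ?_, ?_, ?_⟩
  · filter_upwards [ae_tendsto_dyadicAverage hp hδ₀.le hf hE,
      ae_restrict_mem measurableSet_openCube] with x hfx hx using tendsto_nhds_unique (hg x hx) hfx
  · refine (holderOnWith_of_edist_le ?_ hδ₀.le fun x hx y hy ↦
      edist_le_of_tendsto_dyadicAverage hp hδ₀ hf hE hg hx hy).continuousOn (by simpa using hδ₀)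
    exact mul_ne_top ofReal_ne_top (rpow_ne_top_of_nonneg (by positivity) hE)
  · intro x hx y hy
    have h := edist_le_of_tendsto_dyadicAverage hp hδ₀ hf hE hg hx hy
    simp only [Fintype.card_fin, gagliardoEnergy] at h ⊢
    refine h.trans ?_
    gcongr
    exact le_max_left _ _
  · intro x hx
    have h := enorm_le_of_tendsto_dyadicAverage hp hδ₀ hf hE hg hx
    simp only [Fintype.card_fin, gagliardoEnergy] at h ⊢
    refine h.trans ?_
    gcongr
    exact le_max_right _ _
end

section
/- Let d ≥ 1 and let h : ℝ^d → ℝ^d be continuously differentiable. Assume there are constants K ≥ 0, η ∈ (0,1), and N_κ > 0 such that: (i) |h(x)| ≤ K(1+|x|) for all x ∈ ℝ^d; (ii) for every x with |∇h(x)| > η, the matrix I_d + ∇h(x) is invertible and |(I_d + ∇h(x))^{−1}| ≤ N_κ. Set N̄ := max((1−η)^{−1}, N_κ). Then the map h̃ : ℝ^d → ℝ^d defined by h̃(x) := x + h(x) is a diffeomorphism of ℝ^d, its inverse h̃^{−1} is Lipschitz with |h̃^{−1}(x) − h̃^{−1}(y)| ≤ N̄ |x−y| for all x, y (in particular |∇h̃^{−1}(x)|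 ≤ N̄ for all x), and |h̃^{−1}(x)| ≤ N̄ K + N̄ |x| for all x ∈ ℝ^d. -/
/-!
The map `f x = x + h x` is `C¹` and its derivative `I + ∇h x` is invertible with inverse of norm at
most `N̄` everywhere (by a Neumann series where `‖∇h x‖ ≤ η`, by hypothesis elsewhere). This is the
setting of Hadamard's global inverse function theorem: `f` is a local diffeomorphism whose local
inverses are `N̄`-Lipschitz, so a lift of a Lipschitz path cannot escape to infinity and every
Lipschitz path lifts. Lifting the segments from `f 0` to `y` and using homotopy lifting gives a
continuous right inverse `g`; it is also a left inverse, since `g ∘ f` and `id` are lifts of `f`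
through the local homeomorphism `f` that agree at `0`. The bounds on `g` follow from
`∇g = (∇f ∘ g)⁻¹`, the mean value inequality, and `‖f 0‖ = ‖h 0‖ ≤ K`.
-/

open Set Filter Topology Metric NNReal Function

theorem LipschitzOnWith.Icc_trans {α : Type*} [PseudoMetricSpace α] {g : ℝ → α} {K : ℝ≥0}
    {a b c : ℝ} (hab : LipschitzOnWith K g (Icc a b)) (hbc : LipschitzOnWith K g (Icc b c)) :
    LipschitzOnWith K g (Icc a c) := by
  have key : ∀ s ∈ Icc a c, ∀ t ∈ Icc a c, s ≤ t → dist (g s) (g t) ≤ K * dist s t := by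
    intro s hs t ht hst
    rcases le_total t b with htb | hbt
    · exact hab.dist_le_mul s ⟨hs.1, hst.trans htb⟩ t ⟨ht.1, htb⟩
    rcases le_total b s with hbs | hsb
    · exact hbc.dist_le_mul s ⟨hbs, hs.2⟩ t ⟨hbt, ht.2⟩
    calc dist (g s) (g t) ≤ dist (g s) (g b) + dist (g b) (g t) := dist_triangle _ _ _
      _ ≤ K * dist s b + K * dist b t :=
        add_le_add (hab.dist_le_mul s ⟨hs.1, hsb⟩ b ⟨hs.1.trans hsb, le_rfl⟩)
          (hbc.dist_le_mul b ⟨le_rfl, hbt.trans ht.2⟩ t ⟨hbt, ht.2⟩)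
      _ = K * dist s t := by
        simp only [Real.dist_eq, abs_of_nonpos (sub_nonpos.2 hsb), abs_of_nonpos (sub_nonpos.2 hbt),
          abs_of_nonpos (sub_nonpos.2 hst)]
        ring
  refine LipschitzOnWith.of_dist_le_mul fun s hs t ht => ?_
  rcases le_total s t with hst | hts
  · exact key s hs t ht hst
  · rw [dist_comm, dist_comm s]; exact key t ht s hs hts

theorem LipschitzOnWith.congr {α β : Type*} [PseudoEMetricSpace α] [PseudoEMetricSpace β]
    {K : ℝ≥0} {s : Set α} {f g : α → β} (hf : LipschitzOnWith K f s) (h : EqOn g f s) :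
    LipschitzOnWith K g s := fun x hx y hy => by
  rw [h hx, h hy]; exact hf hx hy

variable {E F : Type*} [NormedAddCommGroup E] [NormedSpace ℝ E] [NormedAddCommGroup F]
  [NormedSpace ℝ F] {f : E → F} {A : E → E ≃L[ℝ] F} {M : ℝ≥0}

theorem ContDiff.exists_openPartialHomeomorph_lipschitzOnWith_symm [CompleteSpace E]
    (hf : ContDiff ℝ 1 f) (hA : ∀ x, HasFDerivAt f (A x : E →L[ℝ] F) x)
    (hAM : ∀ x, ‖((A x).symm : F →L[ℝ] E)‖ ≤ M) (x : E) :
    ∃ φ : OpenPartialHomeomorph E F, x ∈ φ.source ∧ ⇑φ = f ∧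
      ∃ ρ > 0, ball (f x) ρ ⊆ φ.target ∧ LipschitzOnWith M φ.symm (ball (f x) ρ) := by
  set φ := hf.contDiffAt.toOpenPartialHomeomorph f (hA x) one_ne_zero
  obtain ⟨ρ, hρ, hball⟩ := isOpen_iff.1 φ.open_target (f x)
    (hf.contDiffAt.image_mem_toOpenPartialHomeomorph_target (hA x) one_ne_zero)
  refine ⟨φ, hf.contDiffAt.mem_toOpenPartialHomeomorph_source (hA x) one_ne_zero, rfl, ρ, hρ,
    hball, ?_⟩
  refine (convex_ball _ _).lipschitzOnWith_of_nnnorm_hasFDerivWithin_le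
    (fun y hy => (φ.hasFDerivAt_symm (hball hy) (hA _)).hasFDerivWithinAt) fun y _ => ?_
  exact_mod_cast hAM _

theorem ContDiff.isLocalHomeomorph_of_hasFDerivAt_equiv [CompleteSpace E]
    (hf : ContDiff ℝ 1 f) (hA : ∀ x, HasFDerivAt f (A x : E →L[ℝ] F) x) : IsLocalHomeomorph f :=
  fun x => ⟨hf.contDiffAt.toOpenPartialHomeomorph f (hA x) one_ne_zero,
    hf.contDiffAt.mem_toOpenPartialHomeomorph_source (hA x) one_ne_zero, rfl⟩

theorem OpenPartialHomeomorph.exists_lift_Icc_extend {E F : Type*} [PseudoMetricSpace E]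
    [PseudoMetricSpace F] (φ : OpenPartialHomeomorph E F) {U : Set F} {K L : ℝ≥0}
    (hU : U ⊆ φ.target) (hφU : LipschitzOnWith K φ.symm U) {c : ℝ → F} {Γ : ℝ → E} {T S : ℝ}
    (hT : 0 ≤ T) (hΓ : LipschitzOnWith (K * L) Γ (Icc 0 T)) (hΓc : EqOn (φ ∘ Γ) c (Icc 0 T))
    (hΓT : Γ T ∈ φ.source) (hc : LipschitzOnWith L c (Icc T S)) (hcU : MapsTo c (Icc T S) U) :
    ∃ Γ' : ℝ → E, Γ' 0 = Γ 0 ∧ LipschitzOnWith (K * L) Γ' (Icc 0 S) ∧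
      EqOn (φ ∘ Γ') c (Icc 0 S) := by
  set Γ' : ℝ → E := fun t => if t ≤ T then Γ t else φ.symm (c t)
  have hright : EqOn Γ' (φ.symm ∘ c) (Icc T S) := by
    intro t ht
    rcases ht.1.eq_or_lt with rfl | hTt
    · simp only [Γ', le_rfl, if_true, comp_apply]
      rw [← hΓc ⟨hT, le_rfl⟩, comp_apply, φ.left_inv hΓT]
    · simp [Γ', not_le.2 hTt]
  refine ⟨Γ', by simp [Γ', hT], ?_, fun t ht => ?_⟩
  · refine LipschitzOnWith.Icc_trans (b := T) (hΓ.congr fun t ht => ?_)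
      ((hφU.comp hc hcU).congr hright)
    simp [Γ', ht.2]
  · rcases le_total t T with htT | hTt
    · simpa [Γ', htT] using hΓc ⟨ht.1, htT⟩
    · rw [comp_apply, hright ⟨hTt, ht.2⟩, comp_apply, φ.right_inv (hU (hcU ⟨hTt, ht.2⟩))]

theorem ContDiff.exists_lift_extend_past [CompleteSpace E] (hf : ContDiff ℝ 1 f)
    (hA : ∀ x, HasFDerivAt f (A x : E →L[ℝ] F) x) (hAM : ∀ x, ‖((A x).symm : F →L[ℝ] E)‖ ≤ M)
    {c : ℝ → F} {L : ℝ≥0} (hc : LipschitzOnWith L c (Icc 0 1)) {τ : ℝ} (hτ : τ ∈ Icc (0 : ℝ) 1)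
    {w : E} (hw : f w = c τ) :
    ∃ δ > 0, ∃ U ∈ 𝓝 w, ∀ T, 0 ≤ T → τ - δ < T → ∀ Γ : ℝ → E,
      LipschitzOnWith (M * L) Γ (Icc 0 T) → EqOn (f ∘ Γ) c (Icc 0 T) → Γ T ∈ U →
      ∃ Γ' : ℝ → E, Γ' 0 = Γ 0 ∧ LipschitzOnWith (M * L) Γ' (Icc 0 (min 1 (τ + δ))) ∧
        EqOn (f ∘ Γ') c (Icc 0 (min 1 (τ + δ))) := by
  obtain ⟨φ, hwφ, rfl, ρ, hρ, hball, hlip⟩ :=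
    hf.exists_openPartialHomeomorph_lipschitzOnWith_symm hA hAM w
  obtain ⟨δ, hδ, hcδ⟩ := Metric.continuousWithinAt_iff.1 (hc.continuousOn τ hτ) ρ hρ
  refine ⟨δ / 2, by positivity, φ.source, φ.open_source.mem_nhds hwφ,
    fun T hT hTτ Γ hΓ hΓc hΓT => φ.exists_lift_Icc_extend hball hlip hT hΓ hΓc hΓT
      (hc.mono (Icc_subset_Icc hT (min_le_left _ _))) fun t ht => ?_⟩
  rw [hw, mem_ball]
  refine hcδ ⟨hT.trans ht.1, ht.2.trans (min_le_left _ _)⟩ ?_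
  have := ht.2.trans (min_le_right _ _)
  rw [Real.dist_eq, abs_lt]
  constructor <;> linarith [ht.1]

theorem ContDiff.exists_lift_of_lipschitzOnWith [ProperSpace E] (hf : ContDiff ℝ 1 f)
    (hA : ∀ x, HasFDerivAt f (A x : E →L[ℝ] F) x) (hAM : ∀ x, ‖((A x).symm : F →L[ℝ] E)‖ ≤ M)
    {c : ℝ → F} {L : ℝ≥0} (hc : LipschitzOnWith L c (Icc 0 1)) {x₀ : E} (hx₀ : f x₀ = c 0) :
    ∃ Γ : ℝ → E, Γ 0 = x₀ ∧ LipschitzOnWith (M * L) Γ (Icc 0 1) ∧ EqOn (f ∘ Γ) c (Icc 0 1) := by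
  -- The lifts on `[0, T]`, `T < τ`, stay in a compact ball, so their endpoints accumulate at some
  -- `w` over `c τ`, and the local inverse of `f` at `w` extends one of them beyond `τ`.
  set Q : Set ℝ := {T | T ∈ Icc (0 : ℝ) 1 ∧ ∃ Γ : ℝ → E, Γ 0 = x₀ ∧
    LipschitzOnWith (M * L) Γ (Icc 0 T) ∧ EqOn (f ∘ Γ) c (Icc 0 T)}
  have hQ0 : 0 ∈ Q :=
    ⟨⟨le_rfl, zero_le_one⟩, fun _ => x₀, rfl, (LipschitzWith.const' x₀).lipschitzOnWith,
      by simp [EqOn, hx₀]⟩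
  have hbdd : BddAbove Q := ⟨1, fun T hT => hT.1.2⟩
  set τ := sSup Q
  have hτ : τ ∈ Icc (0 : ℝ) 1 := ⟨le_csSup hbdd hQ0, csSup_le ⟨0, hQ0⟩ fun T hT => hT.1.2⟩
  obtain ⟨T, -, hTτ, hTQ⟩ := exists_seq_tendsto_sSup ⟨0, hQ0⟩ hbdd
  choose Γ hΓ0 hΓ hΓc using fun n => (hTQ n).2
  have hΓT : ∀ n, Γ n (T n) ∈ closedBall x₀ (M * L) := fun n => by
    have := (hΓ n).dist_le_mul (T n) ⟨(hTQ n).1.1, le_rfl⟩ 0 ⟨le_rfl, (hTQ n).1.1⟩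
    rw [hΓ0, Real.dist_0_eq_abs, abs_of_nonneg (hTQ n).1.1] at this
    exact this.trans (mul_le_of_le_one_right (by positivity) (hTQ n).1.2)
  obtain ⟨w, -, σ, hσ, hw⟩ := (isCompact_closedBall x₀ (M * L)).tendsto_subseq hΓT
  have hTστ : Tendsto (T ∘ σ) atTop (𝓝 τ) := hTτ.comp hσ.tendsto_atTop
  have hfw : f w = c τ := by
    refine tendsto_nhds_unique ((hf.continuous.tendsto w).comp hw) ?_
    refine ((hc.continuousOn τ hτ).tendsto.comp (tendsto_nhdsWithin_iff.2 ⟨hTστ,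
      Eventually.of_forall fun n => (hTQ _).1⟩)).congr fun n => ?_
    exact (hΓc (σ n) ⟨(hTQ _).1.1, le_rfl⟩).symm
  obtain ⟨δ, hδ, U, hU, hextend⟩ := hf.exists_lift_extend_past hA hAM hc hτ hfw
  obtain ⟨n, hnτ, hnU⟩ := ((hTστ.eventually (lt_mem_nhds (by linarith : τ - δ < τ))).and
    (hw.eventually hU)).exists
  obtain ⟨Γ', hΓ'0, hΓ', hΓ'c⟩ := hextend _ (hTQ _).1.1 hnτ _ (hΓ _) (hΓc _) hnU
  have hSQ : min 1 (τ + δ) ∈ Q :=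
    ⟨⟨le_min zero_le_one (by linarith [hτ.1]), min_le_left _ _⟩, Γ', hΓ'0.trans (hΓ0 _), hΓ', hΓ'c⟩
  rcases min_choice 1 (τ + δ) with hS | hS
  · rw [hS] at hSQ; exact hSQ.2
  · have := le_csSup hbdd hSQ
    rw [hS] at this
    linarith

theorem ContDiff.exists_continuous_rightInverse [ProperSpace E] (hf : ContDiff ℝ 1 f)
    (hA : ∀ x, HasFDerivAt f (A x : E →L[ℝ] F) x) (hAM : ∀ x, ‖((A x).symm : F →L[ℝ] E)‖ ≤ M) :
    ∃ g : F → E, Continuous g ∧ RightInverse g f ∧ g (f 0) = 0 := by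
  choose Γ hΓ0 hΓ hΓc using fun y : F => hf.exists_lift_of_lipschitzOnWith hA hAM
    (lipschitzWith_lineMap (f 0) y).lipschitzOnWith (x₀ := 0)
    (AffineMap.lineMap_apply_zero _ _).symm
  have hloc := hf.isLocalHomeomorph_of_hasFDerivAt_equiv hA
  have hsep := T2Space.isSeparatedMap f
  have hcont : Continuous fun p : unitInterval × F => Γ p.2 p.1 :=
    hloc.continuous_lift hsep ⟨fun p => AffineMap.lineMap (f 0) p.2 (p.1 : ℝ), by fun_prop⟩
      (funext fun p => hΓc p.2 p.1.2) (by simpa [hΓ0] using continuous_const)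
      fun y => (hΓ y).continuousOn.comp_continuous continuous_subtype_val fun t => t.2
  refine ⟨fun y => Γ y 1, hcont.comp (.prodMk (continuous_const (y := 1)) continuous_id),
    fun y => ?_, ?_⟩
  · simpa using hΓc y ⟨zero_le_one, le_rfl⟩
  · refine hsep.eqOn_of_comp_eqOn hloc.isLocallyInjective isPreconnected_Icc
      (hΓ (f 0)).continuousOn continuousOn_const (g₂ := fun _ => 0) (fun t ht => ?_)
      (left_mem_Icc.2 zero_le_one) (hΓ0 _) (right_mem_Icc.2 zero_le_one)
    simpa using hΓc (f 0) ht

theorem ContDiff.exists_homeomorph_coe_eq [ProperSpace E] (hf : ContDiff ℝ 1 f)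
    (hA : ∀ x, HasFDerivAt f (A x : E →L[ℝ] F) x) (hAM : ∀ x, ‖((A x).symm : F →L[ℝ] E)‖ ≤ M) :
    ∃ e : E ≃ₜ F, ⇑e = f := by
  obtain ⟨g, hg, hgf, hg0⟩ := hf.exists_continuous_rightInverse hA hAM
  have hfg : LeftInverse g f := congr_fun <| (T2Space.isSeparatedMap f).eq_of_comp_eq
    (hf.isLocalHomeomorph_of_hasFDerivAt_equiv hA).isLocallyInjective (hg.comp hf.continuous)
    continuous_id (funext fun x => hgf (f x)) 0 hg0
  exact ⟨⟨⟨f, g, hfg, hgf⟩, hf.continuous, hg⟩, rfl⟩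

theorem ContDiff.exists_lipschitzWith_inverse_of_norm_symm_fderiv_le [ProperSpace E]
    (hf : ContDiff ℝ 1 f) (hA : ∀ x, HasFDerivAt f (A x : E →L[ℝ] F) x)
    (hAM : ∀ x, ‖((A x).symm : F →L[ℝ] E)‖ ≤ M) :
    ∃ g : F → E, LeftInverse g f ∧ RightInverse g f ∧ ContDiff ℝ 1 g ∧
      (∀ y, ‖fderiv ℝ g y‖ ≤ M) ∧ LipschitzWith M g := by
  obtain ⟨e, rfl⟩ := hf.exists_homeomorph_coe_eq hA hAM
  have hderiv : ∀ y, HasFDerivAt e.symm ((A (e.symm y)).symm : F →L[ℝ] E) y := fun y =>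
    (hA _).of_local_left_inverse e.symm.continuous.continuousAt
      (Eventually.of_forall e.apply_symm_apply)
  have hbound : ∀ y, ‖fderiv ℝ e.symm y‖ ≤ M := fun y => (hderiv y).fderiv ▸ hAM _
  exact ⟨e.symm, e.symm_apply_apply, e.apply_symm_apply, e.contDiff_symm hA hf, hbound,
    lipschitzWith_of_nnnorm_fderiv_le (fun y => (hderiv y).differentiableAt)
      fun y => by exact_mod_cast hbound y⟩

theorem ContinuousLinearEquiv.exists_coe_eq_id_add_of_norm_lt_one {𝕜 V : Type*}
    [NontriviallyNormedField 𝕜] [NormedAddCommGroup V] [NormedSpace 𝕜 V] [CompleteSpace V]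
    (T : V →L[𝕜] V) (hT : ‖T‖ < 1) :
    ∃ u : V ≃L[𝕜] V, (u : V →L[𝕜] V) = ContinuousLinearMap.id 𝕜 V + T ∧
      ‖(u.symm : V →L[𝕜] V)‖ ≤ (1 - ‖T‖)⁻¹ := by
  have hnT : ‖-T‖ < 1 := by rwa [norm_neg]
  refine ⟨.ofUnit (Units.oneSub (-T) hnT), (sub_neg_eq_add 1 T).trans rfl, ?_⟩
  have hsum := tsum_geometric_le_of_norm_lt_one (-T) hnT
  have hone : ‖(1 : V →L[𝕜] V)‖ ≤ 1 := ContinuousLinearMap.norm_id_le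
  rw [norm_neg] at hsum
  exact hsum.trans (by linarith)

theorem stmt_5_general (d : ℕ)
    (h : EuclideanSpace ℝ (Fin d) → EuclideanSpace ℝ (Fin d)) (hC1 : ContDiff ℝ 1 h)
    (K η Nκ : ℝ) (hη : η ∈ Set.Ioo (0 : ℝ) 1)
    (hgrowth : ∀ x, ‖h x‖ ≤ K * (1 + ‖x‖))
    (hinv : ∀ x, η < ‖fderiv ℝ h x‖ →
      ∃ u : EuclideanSpace ℝ (Fin d) ≃L[ℝ] EuclideanSpace ℝ (Fin d),
        (u : EuclideanSpace ℝ (Fin d) →L[ℝ] EuclideanSpace ℝ (Fin d)) =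
          ContinuousLinearMap.id ℝ (EuclideanSpace ℝ (Fin d)) + fderiv ℝ h x ∧
        ‖(u.symm : EuclideanSpace ℝ (Fin d) →L[ℝ] EuclideanSpace ℝ (Fin d))‖ ≤ Nκ) :
    ∃ g : EuclideanSpace ℝ (Fin d) → EuclideanSpace ℝ (Fin d),
      Function.LeftInverse g (fun x => x + h x) ∧
      Function.RightInverse g (fun x => x + h x) ∧
      ContDiff ℝ 1 g ∧
      (∀ x y, ‖g x - g y‖ ≤ max (1 - η)⁻¹ Nκ * ‖x - y‖) ∧
      (∀ x, ‖fderiv ℝ g x‖ ≤ max (1 - η)⁻¹ Nκ) ∧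
      (∀ x, ‖g x‖ ≤ max (1 - η)⁻¹ Nκ * K + max (1 - η)⁻¹ Nκ * ‖x‖) := by
  have hη1 : 0 < 1 - η := sub_pos.2 hη.2
  set M := max (1 - η)⁻¹ Nκ
  have hM : 0 ≤ M := (inv_pos.2 hη1).le.trans (le_max_left _ _)
  have hA : ∀ x, ∃ u : EuclideanSpace ℝ (Fin d) ≃L[ℝ] EuclideanSpace ℝ (Fin d),
      (u : EuclideanSpace ℝ (Fin d) →L[ℝ] EuclideanSpace ℝ (Fin d)) =
        ContinuousLinearMap.id ℝ _ + fderiv ℝ h x ∧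
      ‖(u.symm : EuclideanSpace ℝ (Fin d) →L[ℝ] EuclideanSpace ℝ (Fin d))‖ ≤ M := by
    intro x
    rcases le_or_gt ‖fderiv ℝ h x‖ η with hle | hlt
    · obtain ⟨u, hu, hnorm⟩ :=
        ContinuousLinearEquiv.exists_coe_eq_id_add_of_norm_lt_one _ (hle.trans_lt hη.2)
      exact ⟨u, hu, hnorm.trans ((inv_anti₀ hη1 (by linarith)).trans (le_max_left _ _))⟩
    · obtain ⟨u, hu, hnorm⟩ := hinv x hlt
      exact ⟨u, hu, hnorm.trans (le_max_right _ _)⟩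
  choose A hA hAM using hA
  obtain ⟨g, hgl, hgr, hgC1, hgd, hglip⟩ :=
    (contDiff_id.add hC1).exists_lipschitzWith_inverse_of_norm_symm_fderiv_le (M := ⟨M, hM⟩)
      (fun x => hA x ▸ (hasFDerivAt_id x).add (hC1.differentiable one_ne_zero x).hasFDerivAt) hAM
  refine ⟨g, hgl, hgr, hgC1, hglip.norm_sub_le, hgd, fun x => ?_⟩
  have hg0 : g (h 0) = 0 := by simpa using hgl 0
  have hh0 : ‖h 0‖ ≤ K := by simpa using hgrowth 0
  calc ‖g x‖ = ‖g x - g (h 0)‖ := by rw [hg0, sub_zero]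
    _ ≤ M * ‖x - h 0‖ := hglip.norm_sub_le x (h 0)
    _ ≤ M * (‖x‖ + K) := by gcongr; exact (norm_sub_le _ _).trans (by gcongr)
    _ = M * K + M * ‖x‖ := by ring

/-- If `h : ℝ^d → ℝ^d` is `C¹` with linear growth `|h(x)| ≤ K(1+|x|)` and,
whenever `|∇h(x)| > η`, the matrix `I + ∇h(x)` is invertible with `|(I+∇h(x))⁻¹| ≤ N_κ`,
then `h̃(x) = x + h(x)` is a diffeomorphism of `ℝ^d` whose inverse `g` is `N̄`-Lipschitz
(with `N̄ = max((1−η)⁻¹, N_κ)`), `|∇g(x)| ≤ N̄`, and `|g(x)| ≤ N̄K + N̄|x|`. -/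
theorem stmt_5 (d : ℕ) (hd : 1 ≤ d)
    (h : EuclideanSpace ℝ (Fin d) → EuclideanSpace ℝ (Fin d)) (hC1 : ContDiff ℝ 1 h)
    (K η Nκ : ℝ) (hK : 0 ≤ K) (hη : η ∈ Set.Ioo (0 : ℝ) 1) (hNκ : 0 < Nκ)
    (hgrowth : ∀ x, ‖h x‖ ≤ K * (1 + ‖x‖))
    (hinv : ∀ x, η < ‖fderiv ℝ h x‖ →
      ∃ u : EuclideanSpace ℝ (Fin d) ≃L[ℝ] EuclideanSpace ℝ (Fin d),
        (u : EuclideanSpace ℝ (Fin d) →L[ℝ] EuclideanSpace ℝ (Fin d)) =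
          ContinuousLinearMap.id ℝ (EuclideanSpace ℝ (Fin d)) + fderiv ℝ h x ∧
        ‖(u.symm : EuclideanSpace ℝ (Fin d) →L[ℝ] EuclideanSpace ℝ (Fin d))‖ ≤ Nκ) :
    ∃ g : EuclideanSpace ℝ (Fin d) → EuclideanSpace ℝ (Fin d),
      Function.LeftInverse g (fun x => x + h x) ∧
      Function.RightInverse g (fun x => x + h x) ∧
      ContDiff ℝ 1 g ∧
      (∀ x y, ‖g x - g y‖ ≤ max (1 - η)⁻¹ Nκ * ‖x - y‖) ∧
      (∀ x, ‖fderiv ℝ g x‖ ≤ max (1 - η)⁻¹ Nκ) ∧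
      (∀ x, ‖g x‖ ≤ max (1 - η)⁻¹ Nκ * K + max (1 - η)⁻¹ Nκ * ‖x‖) :=
  stmt_5_general d h hC1 K η Nκ hη hgrowth hinv
end

section
/- Let d ≥ 1, n ≥ 1, and let f : ℝ^d → ℝ^d be an n-times continuously differentiable diffeomorphism of ℝ^d (so f is a bijection, f and f^{−1} are C^n, and ∇f(x) is invertible for every x). Then for every multi-index γ with 1 ≤ |γ| ≤ n, each component of ∂^γ (f^{−1})(x) equals P evaluated at the entries of the matrix [∇f(f^{−1}(x))]^{−1} and the entries of the derivatives ∂^{γ'} ∇f(f^{−1}(x)) over all multi-indices γ' with 1 ≤ |γ'| ≤ |γ| − 1, where P is a polynomial with real coefficients depending only on d and γ (and not on f or x). In particular, ∇(f^{−1})(x) = [∇f(f^{−1}(x))]^{−1}. -/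
/-- The partial derivative `∂ᵢ g` of a scalar function `g : ℝ^d → ℝ`. -/
noncomputable def pd {d : ℕ} (i : Fin d) (g : (Fin d → ℝ) → ℝ) : (Fin d → ℝ) → ℝ :=
  fun x => fderiv ℝ g x (Pi.single i 1)

/-- The multi-index derivative `∂^γ g = ∂₁^{γ₁} ⋯ ∂_d^{γ_d} g`. -/
noncomputable def mderiv {d : ℕ} (γ : Fin d → ℕ) (g : (Fin d → ℝ) → ℝ) :
    (Fin d → ℝ) → ℝ :=
  (List.finRange d).foldr (fun i acc => (pd i)^[γ i] acc) g

/-- The Jacobian matrix `∇f(x) = (∂ⱼ f^i(x))_{i,j}` of `f : ℝ^d → ℝ^d`. -/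
noncomputable def jac {d : ℕ} (f : (Fin d → ℝ) → (Fin d → ℝ)) (x : Fin d → ℝ) :
    Matrix (Fin d) (Fin d) ℝ :=
  Matrix.of fun i j => pd j (fun y => f y i) x

/-!
Differentiating `f (g x) = x` gives `∇g = (∇f ∘ g)⁻¹`. Call the entries of `W = (∇f ∘ g)⁻¹`
and the functions `∂^{γ'} ∂_j f^i ∘ g` with `1 ≤ |γ'| ≤ m` the jet variables of level `m`.
Each `∂_i` of a level-`m` jet variable is a polynomial in level-`(m + 1)` jet variables: by the
chain rule for the second kind, and by `∂_i W = -W (∂_i A) W` with `A = ∇f ∘ g` for the first.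
By the Leibniz rule `∂_i` then maps polynomials in level-`m` jet variables to polynomials in
level-`(m + 1)` ones, with coefficients independent of `f`, and induction on `|γ|`, starting
from `∂_i g^k = W_{k i}`, gives the theorem.
-/

variable {d : ℕ}

section PartialDerivative

variable {g h : (Fin d → ℝ) → ℝ} {x : Fin d → ℝ}

theorem contDiff_pd {r : ℕ} (hg : ContDiff ℝ (r + 1 : ℕ) g) (i : Fin d) :
    ContDiff ℝ r (pd i g) :=
  (ContinuousLinearMap.apply ℝ ℝ (Pi.single i 1)).contDiff.comp
    (hg.fderiv_right (by push_cast; rfl))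

theorem contDiff_iterate_pd {r k : ℕ} (hg : ContDiff ℝ (r + k : ℕ) g) (i : Fin d) :
    ContDiff ℝ r ((pd i)^[k] g) := by
  induction k generalizing g with
  | zero => simpa using hg
  | succ k ih => exact ih (contDiff_pd (by rwa [← add_assoc] at hg) i)

theorem pd_comm (hg : ContDiff ℝ 2 g) (a b : Fin d) : pd a (pd b g) = pd b (pd a g) := by
  funext x
  have hg' : Differentiable ℝ (fderiv ℝ g) :=
    (hg.fderiv_right (m := 1) (by norm_num)).differentiable (by norm_num)
  have second (u v : Fin d) :
      pd u (pd v g) x = fderiv ℝ (fderiv ℝ g) x (Pi.single u 1) (Pi.single v 1) := by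
    change fderiv ℝ (fun y => fderiv ℝ g y (Pi.single v 1)) x (Pi.single u 1) = _
    simp [fderiv_clm_apply (hg' x) (differentiableAt_const _)]
  rw [second, second]
  exact second_derivative_symmetric (fun y => (hg.differentiable two_ne_zero y).hasFDerivAt)
    (hg' x).hasFDerivAt _ _

theorem pd_iterate_comm {k : ℕ} (hg : ContDiff ℝ (k + 1 : ℕ) g) (a i : Fin d) :
    pd a ((pd i)^[k] g) = (pd i)^[k] (pd a g) := by
  induction k generalizing g with
  | zero => rfl
  | succ k ih =>
    rw [Function.iterate_succ_apply, Function.iterate_succ_apply, ih (contDiff_pd hg i),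
      pd_comm (hg.of_le (by exact_mod_cast (by omega : 2 ≤ k + 1 + 1))) a i]

theorem pd_const (i : Fin d) (c : ℝ) : pd i (fun _ => c) x = 0 := by
  simp [pd]

theorem pd_add (i : Fin d) (hg : DifferentiableAt ℝ g x) (hh : DifferentiableAt ℝ h x) :
    pd i (fun y => g y + h y) x = pd i g x + pd i h x := by
  simp [pd, fderiv_fun_add hg hh]

theorem pd_mul (i : Fin d) (hg : DifferentiableAt ℝ g x) (hh : DifferentiableAt ℝ h x) :
    pd i (fun y => g y * h y) x = g x * pd i h x + pd i g x * h x := by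
  simp [pd, fderiv_fun_mul hg hh, mul_comm]

theorem pd_sum (i : Fin d) {ι : Type*} {s : Finset ι} {F : ι → (Fin d → ℝ) → ℝ}
    (hF : ∀ c ∈ s, DifferentiableAt ℝ (F c) x) :
    pd i (fun y => ∑ c ∈ s, F c y) x = ∑ c ∈ s, pd i (F c) x := by
  simp [pd, fderiv_fun_sum hF]

theorem pd_comp {φ : (Fin d → ℝ) → (Fin d → ℝ)} (i : Fin d) (hh : DifferentiableAt ℝ h (φ x))
    (hφ : DifferentiableAt ℝ φ x) :
    pd i (fun y => h (φ y)) x = ∑ m, pd m h (φ x) * pd i (fun y => φ y m) x := by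
  simp only [pd]
  rw [show (fun y => h (φ y)) = h ∘ φ from rfl, fderiv_comp x hh hφ,
    ContinuousLinearMap.comp_apply, pi_eq_sum_univ' (fderiv ℝ φ x (Pi.single i 1)), map_sum]
  simp [fderiv_apply hφ, mul_comm]

end PartialDerivative

section MultiIndex

open Function

variable {g : (Fin d → ℝ) → ℝ}

noncomputable def mderivAlong (L : List (Fin d)) (γ : Fin d → ℕ) (g : (Fin d → ℝ) → ℝ) :
    (Fin d → ℝ) → ℝ :=
  L.foldr (fun i acc => (pd i)^[γ i] acc) g

theorem mderivAlong_cons (i : Fin d) (L : List (Fin d)) (γ : Fin d → ℕ) :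
    mderivAlong (i :: L) γ g = (pd i)^[γ i] (mderivAlong L γ g) := rfl

theorem contDiff_mderivAlong {r : ℕ} (L : List (Fin d)) (γ : Fin d → ℕ)
    (hg : ContDiff ℝ (r + (L.map γ).sum : ℕ) g) : ContDiff ℝ r (mderivAlong L γ g) := by
  induction L generalizing r with
  | nil => simpa [mderivAlong] using hg
  | cons i L ih =>
    refine contDiff_iterate_pd (ih ?_) i
    simpa [add_assoc, add_left_comm] using hg

theorem pd_mderivAlong (L : List (Fin d)) (γ : Fin d → ℕ)
    (hg : ContDiff ℝ ((L.map γ).sum + 1 : ℕ) g) (a : Fin d) :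
    pd a (mderivAlong L γ g) = mderivAlong L γ (pd a g) := by
  induction L with
  | nil => rfl
  | cons i L ih =>
    have hsum : ((i :: L).map γ).sum + 1 = γ i + 1 + (L.map γ).sum := by simp; ring
    rw [mderivAlong_cons, mderivAlong_cons,
      pd_iterate_comm (contDiff_mderivAlong L γ (by rwa [hsum] at hg)) a i,
      ih (hg.of_le (by exact_mod_cast (by simp)))]

theorem mderivAlong_congr {L : List (Fin d)} {γ γ' : Fin d → ℕ} (h : ∀ j ∈ L, γ j = γ' j) :
    mderivAlong L γ g = mderivAlong L γ' g := by
  induction L with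
  | nil => rfl
  | cons i L ih =>
    rw [mderivAlong_cons, mderivAlong_cons, h i (by simp),
      ih fun j hj => h j (List.mem_cons_of_mem i hj)]

theorem mderivAlong_update_succ {L : List (Fin d)} (hL : L.Nodup) {a : Fin d} (ha : a ∈ L)
    (γ : Fin d → ℕ) (hg : ContDiff ℝ ((L.map γ).sum + 1 : ℕ) g) :
    mderivAlong L (update γ a (γ a + 1)) g = mderivAlong L γ (pd a g) := by
  induction L with
  | nil => simp at ha
  | cons i L ih =>
    obtain ⟨hiL, hL⟩ := List.nodup_cons.mp hL
    have hg' : ContDiff ℝ ((L.map γ).sum + 1 : ℕ) g :=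
      hg.of_le (by exact_mod_cast (by simp))
    rw [mderivAlong_cons, mderivAlong_cons]
    by_cases hia : i = a
    · subst hia
      rw [update_self, Function.iterate_succ_apply, ← pd_mderivAlong L γ hg',
        mderivAlong_congr fun j hj => update_of_ne (ne_of_mem_of_not_mem hj hiL) _ _]
    · rw [update_of_ne hia, ih hL ((List.mem_cons.mp ha).resolve_left (Ne.symm hia)) hg']

theorem mderiv_eq_mderivAlong (γ : Fin d → ℕ) (g : (Fin d → ℝ) → ℝ) :
    mderiv γ g = mderivAlong (List.finRange d) γ g := rfl

theorem contDiff_mderiv {r : ℕ} (γ : Fin d → ℕ) (hg : ContDiff ℝ (r + ∑ i, γ i : ℕ) g) :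
    ContDiff ℝ r (mderiv γ g) :=
  contDiff_mderivAlong _ γ (by rwa [Fin.sum_univ_def] at hg)

theorem pd_mderiv (γ : Fin d → ℕ) (a : Fin d) (hg : ContDiff ℝ (∑ i, γ i + 1 : ℕ) g) :
    pd a (mderiv γ g) = mderiv (update γ a (γ a + 1)) g := by
  rw [Fin.sum_univ_def] at hg
  rw [mderiv_eq_mderivAlong, mderiv_eq_mderivAlong, pd_mderivAlong _ γ hg,
    mderivAlong_update_succ (List.nodup_finRange d) (List.mem_finRange a) γ hg]

theorem mderiv_zero (g : (Fin d → ℝ) → ℝ) : mderiv 0 g = g := by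
  rw [mderiv_eq_mderivAlong]
  induction List.finRange d with
  | nil => rfl
  | cons i L ih => rw [mderivAlong_cons, ih]; rfl

theorem mderiv_single (a : Fin d) (hg : ContDiff ℝ 1 g) : mderiv (Pi.single a 1) g = pd a g := by
  have h := pd_mderiv 0 a (g := g) (by simpa using hg)
  rw [mderiv_zero] at h
  -- `Pi.single a 1` unfolds to `update 0 a (0 a + 1)`
  rw [h]
  rfl

theorem sum_update_succ (γ : Fin d → ℕ) (a : Fin d) :
    ∑ i, update γ a (γ a + 1) i = ∑ i, γ i + 1 := by
  rw [Finset.sum_update_of_mem (Finset.mem_univ a), ← Finset.add_sum_erase _ _ (Finset.mem_univ a),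
    Finset.sdiff_singleton_eq_erase]
  ring

theorem exists_eq_update_succ {γ : Fin d → ℕ} (h : ∑ i, γ i ≠ 0) :
    ∃ γ' a, γ = update γ' a (γ' a + 1) := by
  obtain ⟨a, -, ha⟩ := Finset.exists_ne_zero_of_sum_ne_zero h
  exact ⟨update γ a (γ a - 1), a, by simp [Nat.sub_add_cancel (Nat.pos_of_ne_zero ha)]⟩

end MultiIndex

section Jacobian

theorem pd_coord (i j : Fin d) (x : Fin d → ℝ) :
    pd j (fun y => y i) x = (1 : Matrix (Fin d) (Fin d) ℝ) i j := by
  have : (fun y : Fin d → ℝ => y i) = ContinuousLinearMap.proj (R := ℝ) i := rfl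
  simp [pd, this, Matrix.one_apply, Pi.single_apply]

theorem jac_comp_mul_jac {f g : (Fin d → ℝ) → (Fin d → ℝ)} (hfg : Function.RightInverse g f)
    (hf : Differentiable ℝ f) (hg : Differentiable ℝ g) (x : Fin d → ℝ) :
    jac f (g x) * jac g x = 1 := by
  ext a b
  have chain := pd_comp b (differentiableAt_pi.1 (hf (g x)) a) (hg x)
  simp only [hfg _, pd_coord] at chain
  simp [Matrix.mul_apply, jac, chain]

theorem pd_entry_eq_neg_mul_of_mul_eq_one {ι : Type*} [Fintype ι] [DecidableEq ι]
    {A W : (Fin d → ℝ) → Matrix ι ι ℝ} {x : Fin d → ℝ} (hAW : ∀ z, A z * W z = 1)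
    (hA : ∀ a b, DifferentiableAt ℝ (fun z => A z a b) x)
    (hW : ∀ a b, DifferentiableAt ℝ (fun z => W z a b) x) (i : Fin d) :
    Matrix.of (fun a b => pd i (fun z => W z a b) x)
      = -(W x * Matrix.of (fun a b => pd i (fun z => A z a b) x) * W x) := by
  set M := Matrix.of fun a b => pd i (fun z => W z a b) x
  set N := Matrix.of fun a b => pd i (fun z => A z a b) x
  have leibniz : A x * M + N * W x = 0 := by
    refine Matrix.ext fun a b => ?_
    have h : pd i (fun z => (A z * W z) a b) x = ∑ c, pd i (fun z => A z a c * W z c b) x := by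
      simp only [Matrix.mul_apply]
      exact pd_sum i fun c _ => (hA a c).mul (hW c b)
    simp only [hAW, pd_const] at h
    simp [M, N, Matrix.mul_apply, ← Finset.sum_add_distrib, h, pd_mul i (hA _ _) (hW _ _)]
  calc M = W x * A x * M := by rw [mul_eq_one_comm.mp (hAW x), one_mul]
    _ = -(W x * N * W x) := by
      rw [Matrix.mul_assoc, eq_neg_of_add_eq_zero_left leibniz, Matrix.mul_neg, Matrix.mul_assoc]

end Jacobian

structure ContDiffRightInverse (r : ℕ) (f g : (Fin d → ℝ) → (Fin d → ℝ)) : Prop where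
  right_inv : Function.RightInverse g f
  contDiff_left : ContDiff ℝ r f
  contDiff_right : ContDiff ℝ r g

namespace ContDiffRightInverse

variable {r : ℕ} {f g : (Fin d → ℝ) → (Fin d → ℝ)} (H : ContDiffRightInverse r f g)
include H

theorem mono {s : ℕ} (hsr : s ≤ r) : ContDiffRightInverse s f g :=
  ⟨H.right_inv, H.contDiff_left.of_le (by exact_mod_cast hsr),
    H.contDiff_right.of_le (by exact_mod_cast hsr)⟩

theorem contDiff_pd_left {s : ℕ} (hsr : s + 1 ≤ r) (c e : Fin d) :
    ContDiff ℝ s (pd e (fun y => f y c)) :=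
  contDiff_pd ((contDiff_pi.1 H.contDiff_left c).of_le (by exact_mod_cast hsr)) e

theorem contDiff_pd_right {s : ℕ} (hsr : s + 1 ≤ r) (c e : Fin d) :
    ContDiff ℝ s (pd e (fun y => g y c)) :=
  contDiff_pd ((contDiff_pi.1 H.contDiff_right c).of_le (by exact_mod_cast hsr)) e

theorem differentiable_left (hr : 1 ≤ r) : Differentiable ℝ f :=
  H.contDiff_left.differentiable (by exact_mod_cast Nat.one_le_iff_ne_zero.mp hr)

theorem differentiable_right (hr : 1 ≤ r) : Differentiable ℝ g :=
  H.contDiff_right.differentiable (by exact_mod_cast Nat.one_le_iff_ne_zero.mp hr)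

theorem jac_eq_inv (hr : 1 ≤ r) (x : Fin d → ℝ) : jac g x = (jac f (g x))⁻¹ :=
  (Matrix.inv_eq_right_inv (jac_comp_mul_jac H.right_inv (H.differentiable_left hr)
    (H.differentiable_right hr) x)).symm

theorem mul_jac_inv (hr : 1 ≤ r) (x : Fin d → ℝ) : jac f (g x) * (jac f (g x))⁻¹ = 1 := by
  rw [← H.jac_eq_inv hr]
  exact jac_comp_mul_jac H.right_inv (H.differentiable_left hr) (H.differentiable_right hr) x

theorem jac_inv_apply (hr : 1 ≤ r) (x : Fin d → ℝ) (a b : Fin d) :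
    (jac f (g x))⁻¹ a b = pd b (fun y => g y a) x := by
  rw [← H.jac_eq_inv hr]
  rfl

theorem pd_comp_eq_sum_mul_jac_inv {F : (Fin d → ℝ) → ℝ} (hF : Differentiable ℝ F)
    (hr : 1 ≤ r) (i : Fin d) (x : Fin d → ℝ) :
    pd i (fun y => F (g y)) x = ∑ q, pd q F (g x) * (jac f (g x))⁻¹ q i := by
  simp only [H.jac_inv_apply hr]
  exact pd_comp i (hF _) (H.differentiable_right hr x)

theorem mderiv_update_succ (γ : Fin d → ℕ) (i k : Fin d) (hr : ∑ j, γ j + 1 ≤ r) :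
    mderiv (Function.update γ i (γ i + 1)) (fun y => g y k) = pd i (mderiv γ fun y => g y k) :=
  (pd_mderiv γ i ((contDiff_pi.1 H.contDiff_right k).of_le (by exact_mod_cast hr))).symm

end ContDiffRightInverse

section Jet

open MvPolynomial Function

variable (d) in
abbrev JetVar (m : ℕ) : Type :=
  (Fin d × Fin d) ⊕ ({γ' : Fin d → ℕ // 1 ≤ ∑ i, γ' i ∧ ∑ i, γ' i ≤ m} × (Fin d × Fin d))

noncomputable def jet (m : ℕ) (f g : (Fin d → ℝ) → (Fin d → ℝ)) (x : Fin d → ℝ) :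
    JetVar d m → ℝ :=
  Sum.elim (fun ij => (jac f (g x))⁻¹ ij.1 ij.2)
    (fun t => mderiv t.1.1 (pd t.2.2 (fun y => f y t.2.1)) (g x))

def JetVar.castSucc {m : ℕ} : JetVar d m → JetVar d (m + 1) :=
  Sum.map id (Prod.map (fun t => ⟨t.1, t.2.1, t.2.2.trans m.le_succ⟩) id)

theorem jet_castSucc (m : ℕ) (f g : (Fin d → ℝ) → (Fin d → ℝ)) (x : Fin d → ℝ)
    (s : JetVar d m) : jet (m + 1) f g x s.castSucc = jet m f g x s := by
  rcases s with _ | _ <;> rfl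

def IsJetPolynomial (m r : ℕ)
    (F : ((Fin d → ℝ) → (Fin d → ℝ)) → ((Fin d → ℝ) → (Fin d → ℝ)) → (Fin d → ℝ) → ℝ) : Prop :=
  ∃ P : MvPolynomial (JetVar d m) ℝ,
    ∀ f g, ContDiffRightInverse r f g → ∀ x, F f g x = eval (jet m f g x) P

variable {m : ℕ} {f g : (Fin d → ℝ) → (Fin d → ℝ)}

theorem ContDiffRightInverse.differentiable_jet (H : ContDiffRightInverse (m + 2) f g)
    (s : JetVar d m) : Differentiable ℝ fun x => jet m f g x s := by
  rcases s with ⟨a, b⟩ | ⟨⟨t, -, ht⟩, c, e⟩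
  · simp only [jet, Sum.elim_inl, H.jac_inv_apply (by omega)]
    exact (H.contDiff_pd_right (s := 1) (by omega) a b).differentiable one_ne_zero
  · refine Differentiable.comp ?_ (H.differentiable_right (by omega))
    exact (contDiff_mderiv (r := 1) t (H.contDiff_pd_left (by omega) c e)).differentiable
      one_ne_zero

theorem ContDiffRightInverse.differentiable_eval_jet (H : ContDiffRightInverse (m + 2) f g)
    (P : MvPolynomial (JetVar d m) ℝ) : Differentiable ℝ fun x => eval (jet m f g x) P := by
  induction P using MvPolynomial.induction_on with
  | C a => simp
  | add p q hp hq => simp only [map_add]; exact hp.add hq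
  | mul_X p s hp => simp only [map_mul, eval_X]; exact hp.mul (H.differentiable_jet s)

theorem isJetPolynomial_pd_jet_inr (m : ℕ)
    (t : {γ' : Fin d → ℕ // 1 ≤ ∑ i, γ' i ∧ ∑ i, γ' i ≤ m}) (c e i : Fin d) :
    IsJetPolynomial (m + 1) (m + 2) fun f g x =>
      pd i (fun y => jet m f g y (Sum.inr (t, (c, e)))) x := by
  obtain ⟨t, -, ht⟩ := t
  refine ⟨∑ q, X (Sum.inr (⟨update t q (t q + 1), by rw [sum_update_succ]; omega,
      by rw [sum_update_succ]; omega⟩, (c, e))) * X (Sum.inl (q, i)), fun f g H x => ?_⟩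
  have hF : ContDiff ℝ (∑ j, t j + 1 : ℕ) (pd e fun y => f y c) :=
    H.contDiff_pd_left (by omega) c e
  change pd i (fun y => mderiv t (pd e fun y => f y c) (g y)) x = _
  rw [H.pd_comp_eq_sum_mul_jac_inv
    ((contDiff_mderiv (r := 1) t (by rwa [add_comm])).differentiable one_ne_zero) (by omega)]
  simp [jet, pd_mderiv t _ hF]

theorem isJetPolynomial_pd_jet_inl (m : ℕ) (a b i : Fin d) :
    IsJetPolynomial (m + 1) (m + 2) fun f g x =>
      pd i (fun y => jet m f g y (Sum.inl (a, b))) x := by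
  have hsingle (q : Fin d) : 1 ≤ ∑ j, (Pi.single q 1 : Fin d → ℕ) j ∧
      ∑ j, (Pi.single q 1 : Fin d → ℕ) j ≤ m + 1 := by simp
  -- `∂ᵢ W = -W (∂ᵢ A) W` for `A = ∇f ∘ g`, `W = A⁻¹`, and `∂ᵢ A_cp = ∑_q (∂_q ∂_p f^c ∘ g) W_qi`
  refine ⟨-∑ p, (∑ c, X (Sum.inl (a, c)) *
      ∑ q, X (Sum.inr (⟨Pi.single q 1, hsingle q⟩, (c, p))) * X (Sum.inl (q, i))) *
      X (Sum.inl (p, b)), fun f g H x => ?_⟩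
  have hfc (c p : Fin d) : Differentiable ℝ (pd p fun y => f y c) :=
    (H.contDiff_pd_left (s := 1) (by omega) c p).differentiable one_ne_zero
  have hW (c p : Fin d) : Differentiable ℝ fun z => (jac f (g z))⁻¹ c p := by
    simp only [H.jac_inv_apply (by omega)]
    exact (H.contDiff_pd_right (s := 1) (by omega) c p).differentiable one_ne_zero
  have hN (c p : Fin d) : pd i (fun z => jac f (g z) c p) x =
      ∑ q, mderiv (Pi.single q 1) (pd p fun y => f y c) (g x) * (jac f (g x))⁻¹ q i := by
    rw [show (fun z => jac f (g z) c p) = fun z => pd p (fun y => f y c) (g z) from rfl,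
      H.pd_comp_eq_sum_mul_jac_inv (hfc c p) (by omega)]
    simp only [mderiv_single _ (H.contDiff_pd_left (s := 1) (by omega) c p)]
  have hderivW := congrFun₂ (pd_entry_eq_neg_mul_of_mul_eq_one (A := fun z => jac f (g z))
    (fun z => H.mul_jac_inv (by omega) z)
    (fun c p => ((hfc c p).comp (H.differentiable_right (by omega))) x)
    (fun c p => hW c p x) i) a b
  simp only [Matrix.of_apply] at hderivW
  change pd i (fun y => (jac f (g y))⁻¹ a b) x = _
  rw [hderivW]
  simp [jet, Matrix.mul_apply, hN, Finset.mul_sum, Finset.sum_mul]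

theorem isJetPolynomial_pd_jet (m : ℕ) (s : JetVar d m) (i : Fin d) :
    IsJetPolynomial (m + 1) (m + 2) fun f g x => pd i (fun y => jet m f g y s) x := by
  rcases s with ⟨a, b⟩ | ⟨t, c, e⟩
  exacts [isJetPolynomial_pd_jet_inl m a b i, isJetPolynomial_pd_jet_inr m t c e i]

theorem isJetPolynomial_pd_eval_jet (m : ℕ) (P : MvPolynomial (JetVar d m) ℝ) (i : Fin d) :
    IsJetPolynomial (m + 1) (m + 2) fun f g x => pd i (fun y => eval (jet m f g y) P) x := by
  induction P using MvPolynomial.induction_on with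
  | C a => exact ⟨0, fun f g _ x => by simp [pd_const]⟩
  | add p q hp hq =>
    obtain ⟨Qp, hQp⟩ := hp
    obtain ⟨Qq, hQq⟩ := hq
    beta_reduce at hQp hQq
    refine ⟨Qp + Qq, fun f g H x => ?_⟩
    simp only [map_add]
    rw [pd_add i (H.differentiable_eval_jet p x) (H.differentiable_eval_jet q x), hQp f g H x,
      hQq f g H x]
  | mul_X p s hp =>
    obtain ⟨Qp, hQp⟩ := hp
    obtain ⟨Ds, hDs⟩ := isJetPolynomial_pd_jet m s i
    beta_reduce at hQp hDs
    refine ⟨rename JetVar.castSucc p * Ds + Qp * X s.castSucc, fun f g H x => ?_⟩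
    simp only [map_mul, map_add, eval_X, eval_rename, Function.comp_def, jet_castSucc]
    rw [pd_mul i (H.differentiable_eval_jet p x) (H.differentiable_jet s x), hQp f g H x,
      hDs f g H x]

theorem isJetPolynomial_mderiv (m : ℕ) (γ : Fin d → ℕ) (hγ : ∑ i, γ i = m + 1) (k : Fin d) :
    IsJetPolynomial m (m + 1) fun _ g => mderiv γ fun y => g y k := by
  induction m generalizing γ with
  | zero =>
    obtain ⟨γ, i, rfl⟩ := exists_eq_update_succ (by omega : ∑ i, γ i ≠ 0)
    rw [sum_update_succ] at hγ
    obtain rfl : γ = 0 := funext fun j => Finset.sum_eq_zero_iff.mp (by omega) j (Finset.mem_univ j)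
    refine ⟨X (Sum.inl (k, i)), fun f g H x => ?_⟩
    beta_reduce
    rw [H.mderiv_update_succ 0 i k (by simp), mderiv_zero, eval_X]
    exact (H.jac_inv_apply le_rfl x k i).symm
  | succ m ih =>
    obtain ⟨γ, i, rfl⟩ := exists_eq_update_succ (by omega : ∑ i, γ i ≠ 0)
    rw [sum_update_succ] at hγ
    obtain ⟨P, hP⟩ := ih γ (by omega)
    obtain ⟨Q, hQ⟩ := isJetPolynomial_pd_eval_jet m P i
    beta_reduce at hP hQ
    refine ⟨Q, fun f g H x => ?_⟩
    beta_reduce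
    rw [H.mderiv_update_succ γ i k (by omega),
      show mderiv γ (fun y => g y k) = fun y => eval (jet m f g y) P from
        funext (hP f g (H.mono (by omega)))]
    exact hQ f g H x

end Jet

theorem stmt_7_general (d n : ℕ) (γ : Fin d → ℕ)
    (hγ1 : 1 ≤ ∑ i, γ i) (hγn : ∑ i, γ i ≤ n) (k : Fin d) :
    ∃ P : MvPolynomial
        ((Fin d × Fin d) ⊕
          ({γ' : Fin d → ℕ // 1 ≤ ∑ i, γ' i ∧ ∑ i, γ' i ≤ (∑ i, γ i) - 1} ×
            (Fin d × Fin d))) ℝ,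
      ∀ f g : (Fin d → ℝ) → (Fin d → ℝ),
        Function.LeftInverse g f →
        Function.RightInverse g f →
        ContDiff ℝ n f →
        ContDiff ℝ n g →
        (∀ x, IsUnit (jac f x)) →
        (∀ x, jac g x = (jac f (g x))⁻¹) ∧
        ∀ x, mderiv γ (fun y => g y k) x =
          MvPolynomial.eval
            (Sum.elim
              (fun ij : Fin d × Fin d => (jac f (g x))⁻¹ ij.1 ij.2)
              (fun t => mderiv t.1.1 (pd t.2.2 (fun y => f y t.2.1)) (g x)))
            P := by
  obtain ⟨P, hP⟩ := isJetPolynomial_mderiv (∑ i, γ i - 1) γ (by omega) k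
  refine ⟨P, fun f g _ hfg hf hg _ => ?_⟩
  have hle : ((∑ i, γ i - 1 + 1 : ℕ) : WithTop ℕ∞) ≤ n := by exact_mod_cast (by omega)
  have H : ContDiffRightInverse (∑ i, γ i - 1 + 1) f g := ⟨hfg, hf.of_le hle, hg.of_le hle⟩
  exact ⟨H.jac_eq_inv (by omega), hP f g H⟩

/-- Let `f : ℝ^d → ℝ^d` be a `C^n` diffeomorphism with inverse `g` and
everywhere invertible Jacobian.  Then `∇g(x) = [∇f(g(x))]⁻¹`, and for every multi-index
`γ` with `1 ≤ |γ| ≤ n` and every component `k`, `∂^γ g^k (x)` is given by a polynomial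
`P` — depending only on `d` and `γ`, not on `f` or `x` — in the entries of
`[∇f(g(x))]⁻¹` and the entries of `∂^{γ'} ∇f (g(x))` over multi-indices `γ'` with
`1 ≤ |γ'| ≤ |γ| − 1`. -/
theorem stmt_7 (d n : ℕ) (hd : 1 ≤ d) (hn : 1 ≤ n) (γ : Fin d → ℕ)
    (hγ1 : 1 ≤ ∑ i, γ i) (hγn : ∑ i, γ i ≤ n) (k : Fin d) :
    ∃ P : MvPolynomial
        ((Fin d × Fin d) ⊕
          ({γ' : Fin d → ℕ // 1 ≤ ∑ i, γ' i ∧ ∑ i, γ' i ≤ (∑ i, γ i) - 1} ×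
            (Fin d × Fin d))) ℝ,
      ∀ f g : (Fin d → ℝ) → (Fin d → ℝ),
        Function.LeftInverse g f →
        Function.RightInverse g f →
        ContDiff ℝ n f →
        ContDiff ℝ n g →
        (∀ x, IsUnit (jac f x)) →
        (∀ x, jac g x = (jac f (g x))⁻¹) ∧
        ∀ x, mderiv γ (fun y => g y k) x =
          MvPolynomial.eval
            (Sum.elim
              (fun ij : Fin d × Fin d => (jac f (g x))⁻¹ ij.1 ij.2)
              (fun t => mderiv t.1.1 (pd t.2.2 (fun y => f y t.2.1)) (g x)))
            P :=
  stmt_7_general d n γ hγ1 hγn k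
end
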